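/- arXiv:1803.00655 — 8 statements merged into one kernel-verified Lean document; each statement's English description precedes it below -/
import Mathlib

section
/- Let W ⊆ C^ω be a prefix-independent winning condition. For every two-player win/lose game G using colors C and winning condition W, there exists a Player-0 memoryless strategy σ such that W₀ᵐ(G,σ) = W₀ᵐ(G), and likewise there exists a Player-1 memoryless strategy τ such that W₁ᵐ(G,τ) = W₁ᵐ(G). -/
/-!
Well-order all memoryless strategies (through an injection into `Cardinal`) and let the uniform
strategy play, at each vertex of the winning region, the move of the least strategy winning from
that vertex. A strategy winning from `v` still wins after any move consistent with it, so along a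
play of the uniform strategy the least winning strategy of the current vertex can only decrease.
It therefore stabilises, after which the play is consistent with one fixed winning strategy;
prefix independence makes the finite prefix irrelevant.
-/

/-- A run in the graph `(V, E)`: an infinite `E`-path. -/
def IsRun {V : Type*} (E : Set (V × V)) (ρ : ℕ → V) : Prop :=
  ∀ n, (ρ n, ρ (n + 1)) ∈ E

/-- A run is compatible with a strategy `σ` of the player controlling `Vi`. -/
def Compatible {V : Type*} (Vi : Set V) (σ : V → V) (ρ : ℕ → V) : Prop :=
  ∀ n, ρ n ∈ Vi → ρ (n + 1) = σ (ρ n)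

/-- A memoryless strategy for the player controlling `Vi` (encoded as a total
function whose values matter only on `Vi`). -/
def IsStrategy {V : Type*} (Vi : Set V) (E : Set (V × V)) (σ : V → V) : Prop :=
  ∀ v ∈ Vi, (v, σ v) ∈ E

/-- The strategy `σ` of the player controlling `Vi` whose winning condition is
`Win` wins from `v`: every compatible run from `v` has its color sequence in `Win`. -/
def WinsFrom {V : Type*} {C : Type*} (Vi : Set V) (E : Set (V × V)) (π : V → C)
    (Win : Set (ℕ → C)) (σ : V → V) (v : V) : Prop :=
  ∀ ρ : ℕ → V, ρ 0 = v → IsRun E ρ → Compatible Vi σ ρ → (fun n => π (ρ n)) ∈ Win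

/-- `Wᵢᵐ(G, σ)`: the vertices from which `σ` wins. -/
def WinRegion {V : Type*} {C : Type*} (Vi : Set V) (E : Set (V × V)) (π : V → C)
    (Win : Set (ℕ → C)) (σ : V → V) : Set V :=
  {v | WinsFrom Vi E π Win σ v}

/-- `Wᵢᵐ(G)`: the vertices from which some memoryless strategy wins. -/
def WinRegionAll {V : Type*} {C : Type*} (Vi : Set V) (E : Set (V × V)) (π : V → C)
    (Win : Set (ℕ → C)) : Set V :=
  {v | ∃ σ, IsStrategy Vi E σ ∧ WinsFrom Vi E π Win σ v}

/-- Concatenation `w·ρ` of a finite word and an infinite sequence. -/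
def ListAppend {C : Type*} (w : List C) (ρ : ℕ → C) : ℕ → C :=
  fun n => if h : n < w.length then w.get ⟨n, h⟩ else ρ (n - w.length)

/-- `W` is prefix-independent: `wρ ∈ W ↔ ρ ∈ W`. -/
def PrefixIndependent {C : Type*} (W : Set (ℕ → C)) : Prop :=
  ∀ (w : List C) (ρ : ℕ → C), ListAppend w ρ ∈ W ↔ ρ ∈ W

/-- Uniform memoryless determinacy of the game `⟨V₀, V₁, E, π, W⟩`. -/
def UniformlyDetermined {V : Type*} {C : Type*} (V0 V1 : Set V) (E : Set (V × V))
    (π : V → C) (W : Set (ℕ → C)) : Prop :=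
  ∃ σ τ, IsStrategy V0 E σ ∧ IsStrategy V1 E τ ∧
    WinRegion V0 E π W σ ∪ WinRegion V1 E π Wᶜ τ = Set.univ

section PrefixIndependence

variable {C : Type*} {W : Set (ℕ → C)}

theorem listAppend_ofFn_add (f : ℕ → C) (N : ℕ) :
    ListAppend (List.ofFn fun i : Fin N => f i) (fun n => f (n + N)) = f := by
  funext n
  by_cases h : n < N
  · simp [ListAppend, h]
  · simp only [ListAppend, List.length_ofFn, dif_neg h]
    rw [Nat.sub_add_cancel (not_lt.mp h)]

theorem PrefixIndependent.add_mem_iff (hW : PrefixIndependent W) (f : ℕ → C) (N : ℕ) :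
    (fun n => f (n + N)) ∈ W ↔ f ∈ W := by
  rw [← hW (List.ofFn fun i : Fin N => f i), listAppend_ofFn_add]

theorem PrefixIndependent.compl (hW : PrefixIndependent W) : PrefixIndependent Wᶜ :=
  fun w ρ => not_congr (hW w ρ)

end PrefixIndependence

section Plays

variable {V C : Type*} {Vi : Set V} {E : Set (V × V)} {π : V → C} {Win : Set (ℕ → C)}
  {σ τ : V → V} {ρ : ℕ → V}

theorem WinsFrom.of_edge (hW : PrefixIndependent Win) {v u : V}
    (hτ : WinsFrom Vi E π Win τ v) (hvu : (v, u) ∈ E) (hmove : v ∈ Vi → u = τ v) :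
    WinsFrom Vi E π Win τ u := by
  intro ρ h0 hρ hcomp
  let ρ' : ℕ → V := fun n => Nat.casesOn n v ρ
  have hρ' : IsRun E ρ' := by
    rintro (_ | n)
    · simpa [ρ', h0] using hvu
    · exact hρ n
  have hcomp' : Compatible Vi τ ρ' := by
    rintro (_ | n) hn
    · simpa [ρ', h0] using hmove hn
    · exact hcomp n hn
  exact (hW.add_mem_iff (fun n => π (ρ' n)) 1).mpr (hτ ρ' rfl hρ' hcomp')

theorem WinsFrom.colors_mem_of_agree_after {N : ℕ} (hτ : WinsFrom Vi E π Win τ (ρ N))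
    (hW : PrefixIndependent Win) (hρ : IsRun E ρ) (hcomp : Compatible Vi σ ρ)
    (hστ : ∀ n, N ≤ n → σ (ρ n) = τ (ρ n)) :
    (fun n => π (ρ n)) ∈ Win := by
  refine (hW.add_mem_iff _ N).mp (hτ _ (by simp) (fun n => ?_) fun n hn => ?_)
  · simpa [Nat.add_right_comm] using hρ (n + N)
  · simpa [Nat.add_right_comm, hστ (n + N) (Nat.le_add_left N n)] using hcomp (n + N) hn

end Plays

section UniformStrategy

variable {V C : Type*} (Vi : Set V) (E : Set (V × V)) (π : V → C) (Win : Set (ℕ → C))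

open scoped Classical in
noncomputable def leastWinningStrategy (σ₀ : V → V) (v : V) : V → V :=
  if hv : v ∈ WinRegionAll Vi E π Win then
    Function.argminOn embeddingToCardinal {τ | IsStrategy Vi E τ ∧ WinsFrom Vi E π Win τ v} hv
  else σ₀

noncomputable def uniformStrategy (σ₀ : V → V) (v : V) : V :=
  leastWinningStrategy Vi E π Win σ₀ v v

variable {Vi E π Win} {σ₀ τ : V → V} {v : V}

theorem leastWinningStrategy_spec (hv : v ∈ WinRegionAll Vi E π Win) :
    IsStrategy Vi E (leastWinningStrategy Vi E π Win σ₀ v) ∧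
      WinsFrom Vi E π Win (leastWinningStrategy Vi E π Win σ₀ v) v := by
  rw [leastWinningStrategy, dif_pos hv]
  exact Function.argminOn_mem embeddingToCardinal _ hv

theorem leastWinningStrategy_le (hτ : IsStrategy Vi E τ) (hwin : WinsFrom Vi E π Win τ v) :
    embeddingToCardinal (leastWinningStrategy Vi E π Win σ₀ v) ≤ embeddingToCardinal τ := by
  rw [leastWinningStrategy, dif_pos ⟨τ, hτ, hwin⟩]
  exact Function.argminOn_le embeddingToCardinal {τ | IsStrategy Vi E τ ∧ WinsFrom Vi E π Win τ v}
    ⟨hτ, hwin⟩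

theorem isStrategy_uniformStrategy (hσ₀ : IsStrategy Vi E σ₀) :
    IsStrategy Vi E (uniformStrategy Vi E π Win σ₀) := by
  intro v hv
  by_cases hreg : v ∈ WinRegionAll Vi E π Win
  · exact (leastWinningStrategy_spec hreg).1 v hv
  · simpa [uniformStrategy, leastWinningStrategy, hreg] using hσ₀ v hv

theorem leastWinningStrategy_le_of_edge (hW : PrefixIndependent Win) {u : V}
    (hv : v ∈ WinRegionAll Vi E π Win) (hvu : (v, u) ∈ E)
    (hmove : v ∈ Vi → u = uniformStrategy Vi E π Win σ₀ v) :
    u ∈ WinRegionAll Vi E π Win ∧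
      embeddingToCardinal (leastWinningStrategy Vi E π Win σ₀ u) ≤
        embeddingToCardinal (leastWinningStrategy Vi E π Win σ₀ v) := by
  obtain ⟨hstrat, hwin⟩ := leastWinningStrategy_spec (σ₀ := σ₀) hv
  have hwin_u := hwin.of_edge hW hvu hmove
  exact ⟨⟨_, hstrat, hwin_u⟩, leastWinningStrategy_le hstrat hwin_u⟩

theorem winsFrom_uniformStrategy (hW : PrefixIndependent Win)
    (hv : v ∈ WinRegionAll Vi E π Win) :
    WinsFrom Vi E π Win (uniformStrategy Vi E π Win σ₀) v := by
  intro ρ h0 hρ hcomp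
  set least : ℕ → V → V := fun n => leastWinningStrategy Vi E π Win σ₀ (ρ n)
  have hstep (n : ℕ) (hn : ρ n ∈ WinRegionAll Vi E π Win) :=
    leastWinningStrategy_le_of_edge hW hn (hρ n) (hcomp n)
  have hmem (n : ℕ) : ρ n ∈ WinRegionAll Vi E π Win := by
    induction n with
    | zero => exact h0 ▸ hv
    | succ n ih => exact (hstep n ih).1
  have hanti : Antitone fun n => embeddingToCardinal (least n) :=
    antitone_nat_of_succ_le fun n => (hstep n (hmem n)).2
  obtain ⟨N, hN⟩ := WellFoundedLT.antitone_chain_condition hanti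
  have hconst (n : ℕ) (hn : N ≤ n) : least n = least N := (embeddingToCardinal.injective (hN n hn)).symm
  exact (leastWinningStrategy_spec (hmem N)).2.colors_mem_of_agree_after hW hρ hcomp
    fun n hn => congrFun (hconst n hn) (ρ n)

theorem exists_isStrategy_winRegion_eq (hE : ∀ v ∈ Vi, ∃ u, (v, u) ∈ E)
    (hW : PrefixIndependent Win) :
    ∃ σ, IsStrategy Vi E σ ∧ WinRegion Vi E π Win σ = WinRegionAll Vi E π Win := by
  choose! σ₀ hσ₀ using hE
  have hstrat := isStrategy_uniformStrategy (π := π) (Win := Win) hσ₀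
  exact ⟨_, hstrat, Set.Subset.antisymm (fun v hv => ⟨_, hstrat, hv⟩)
    fun v hv => winsFrom_uniformStrategy hW hv⟩

end UniformStrategy

theorem stmt0_general {V C : Type*}
    (V0 V1 : Set V) (E : Set (V × V)) (π : V → C) (W : Set (ℕ → C))
    (hE : ∀ v : V, ∃ u, (v, u) ∈ E)
    (hW : PrefixIndependent W) :
    (∃ σ, IsStrategy V0 E σ ∧ WinRegion V0 E π W σ = WinRegionAll V0 E π W) ∧
    (∃ τ, IsStrategy V1 E τ ∧ WinRegion V1 E π Wᶜ τ = WinRegionAll V1 E π Wᶜ) :=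
  ⟨exists_isStrategy_winRegion_eq (fun v _ => hE v) hW,
    exists_isStrategy_winRegion_eq (fun v _ => hE v) hW.compl⟩

/-- for a game with prefix-independent winning condition, each
player has a single memoryless strategy winning from all of their memoryless
winning region. -/
theorem stmt0 {V C : Type*} [Nonempty C]
    (V0 V1 : Set V) (E : Set (V × V)) (π : V → C) (W : Set (ℕ → C))
    (hdisj : Disjoint V0 V1) (hcover : V0 ∪ V1 = Set.univ)
    (hE : ∀ v : V, ∃ u, (v, u) ∈ E)
    (hW : PrefixIndependent W) :
    (∃ σ, IsStrategy V0 E σ ∧ WinRegion V0 E π W σ = WinRegionAll V0 E π W) ∧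
    (∃ τ, IsStrategy V1 E τ ∧ WinRegion V1 E π Wᶜ τ = WinRegionAll V1 E π Wᶜ) :=
  stmt0_general V0 V1 E π W hE hW
end

section
/- Fix a nonempty color set C and a prefix-independent winning condition W ⊆ C^ω. If every two-player win/lose game with colors C and winning condition W that is void of unfair-win vertices is uniformly memoryless determined, then every two-player win/lose game with colors C and winning condition W is uniformly memoryless determined. -/
/-- An unfair-win vertex: it has a self-loop and a proper outgoing edge, and its
controller wins by looping forever on it. -/
def UnfairWin {V : Type*} {C : Type*} (V0 V1 : Set V) (E : Set (V × V)) (π : V → C)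
    (W : Set (ℕ → C)) (v : V) : Prop :=
  (v, v) ∈ E ∧ (∃ u, u ≠ v ∧ (v, u) ∈ E) ∧
    ((v ∈ V0 ∧ (fun _ => π v) ∈ W) ∨ (v ∈ V1 ∧ (fun _ => π v) ∉ W))


lemma const_of_min {C : Type} (W : Set (ℕ → C)) (hW : PrefixIndependent W) (f : ℕ → C) (N : ℕ) :
    (fun n => f (min n N)) ∈ W ↔ (fun _ => f N) ∈ W := by
  have heq : ListAppend (List.ofFn fun i : Fin N => f i) (fun _ => f N)
      = fun n => f (min n N) := by
    funext n
    unfold ListAppend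
    simp only [List.length_ofFn]
    split_ifs with hn
    · rw [List.get_ofFn]
      simp [min_eq_left hn.le]
    · rw [min_eq_right (le_of_not_gt hn)]
  rw [← heq]
  exact hW _ _

lemma winext {V C : Type} (V0 V1 : Set V) (E E' : Set (V × V)) (π : V → C)
    (W' : Set (ℕ → C)) (hW' : PrefixIndependent W') (hd : Disjoint V0 V1)
    (σ : V → V) (hσ : IsStrategy V0 E' σ)
    (hkey : ∀ v u, (v, u) ∈ E → (v, u) ∉ E' →
      v ∈ V0 ∨ (v ∈ V1 ∧ (v, v) ∈ E' ∧ (fun _ : ℕ => π v) ∉ W')) :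
    WinRegion V0 E' π W' σ ⊆ WinRegion V0 E π W' σ := by
  intro w hw ρ h0 hrun hcomp
  have main : ∀ n, (ρ n, ρ (n + 1)) ∈ E' := by
    intro n
    induction n using Nat.strong_induction_on with
    | _ n ih =>
      by_cases hE' : (ρ n, ρ (n + 1)) ∈ E'
      · exact hE'
      · rcases hkey _ _ (hrun n) hE' with h0' | ⟨hv1, hloop, hnW⟩
        · rw [hcomp n h0']; exact hσ _ h0'
        · exfalso
          set ρ' : ℕ → V := fun m => ρ (min m n) with hρ'
          have hrun' : IsRun E' ρ' := by
            intro m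
            rcases lt_or_ge m n with hm | hm
            · simp only [hρ']
              rw [min_eq_left hm.le, min_eq_left (Nat.succ_le_of_lt hm)]
              exact ih m hm
            · simp only [hρ']
              rw [min_eq_right hm, min_eq_right (le_trans hm (Nat.le_succ m))]
              exact hloop
          have hcomp' : Compatible V0 σ ρ' := by
            intro m hm0
            rcases lt_or_ge m n with hm | hm
            · simp only [hρ'] at hm0 ⊢
              rw [min_eq_left hm.le] at hm0 ⊢
              rw [min_eq_left (Nat.succ_le_of_lt hm)]
              exact hcomp m hm0
            · exfalso
              simp only [hρ', min_eq_right hm] at hm0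
              exact Set.disjoint_left.mp hd hm0 hv1
          have h0' : ρ' 0 = w := by simp only [hρ', Nat.zero_min]; exact h0
          have := hw ρ' h0' hrun' hcomp'
          rw [const_of_min W' hW' (fun m => π (ρ m)) n] at this
          exact hnW this
  exact hw ρ h0 main hcomp

/-- if all games with colors `C` and prefix-independent winning
condition `W` void of unfair-win vertices are uniformly memoryless determined,
then so are all games with colors `C` and winning condition `W`. -/
theorem stmt2 {C : Type} [Nonempty C] (W : Set (ℕ → C)) (hW : PrefixIndependent W)
    (h : ∀ (V : Type) (V0 V1 : Set V) (E : Set (V × V)) (π : V → C),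
      Disjoint V0 V1 → V0 ∪ V1 = Set.univ → (∀ v, ∃ u, (v, u) ∈ E) →
      (∀ v, ¬ UnfairWin V0 V1 E π W v) →
      UniformlyDetermined V0 V1 E π W) :
    ∀ (V : Type) (V0 V1 : Set V) (E : Set (V × V)) (π : V → C),
      Disjoint V0 V1 → V0 ∪ V1 = Set.univ → (∀ v, ∃ u, (v, u) ∈ E) →
      UniformlyDetermined V0 V1 E π W := by
  intro V V0 V1 E π hd hcov hE
  set E' : Set (V × V) := {p | p ∈ E ∧ (¬ UnfairWin V0 V1 E π W p.1 ∨ p.2 = p.1)} with hE'def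
  have hsub : E' ⊆ E := fun p hp => hp.1
  have hE'tot : ∀ v, ∃ u, (v, u) ∈ E' := by
    intro v
    by_cases hu : UnfairWin V0 V1 E π W v
    · exact ⟨v, hu.1, Or.inr rfl⟩
    · obtain ⟨u, hu'⟩ := hE v
      exact ⟨u, hu', Or.inl hu⟩
  have hnounfair : ∀ v, ¬ UnfairWin V0 V1 E' π W v := by
    rintro v ⟨hloop, ⟨u, hune, huE'⟩, hctrl⟩
    have hUnf : UnfairWin V0 V1 E π W v := ⟨hloop.1, ⟨u, hune, huE'.1⟩, hctrl⟩
    rcases huE'.2 with hnu | heq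
    · exact hnu hUnf
    · exact hune heq
  obtain ⟨σ, τ, hσ, hτ, hcover⟩ := h V V0 V1 E' π hd hcov hE'tot hnounfair
  have hWc : PrefixIndependent Wᶜ := by
    intro w ρ
    simp [Set.mem_compl_iff, hW w ρ]
  have hkey0 : ∀ v u, (v, u) ∈ E → (v, u) ∉ E' →
      v ∈ V0 ∨ (v ∈ V1 ∧ (v, v) ∈ E' ∧ (fun _ : ℕ => π v) ∉ W) := by
    intro v u hvu hvu'
    have hUnf : UnfairWin V0 V1 E π W v := by
      by_contra hc
      exact hvu' ⟨hvu, Or.inl hc⟩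
    rcases hUnf.2.2 with ⟨hv0, _⟩ | ⟨hv1, hnW⟩
    · exact Or.inl hv0
    · exact Or.inr ⟨hv1, ⟨hUnf.1, Or.inr rfl⟩, hnW⟩
  have hkey1 : ∀ v u, (v, u) ∈ E → (v, u) ∉ E' →
      v ∈ V1 ∨ (v ∈ V0 ∧ (v, v) ∈ E' ∧ (fun _ : ℕ => π v) ∉ Wᶜ) := by
    intro v u hvu hvu'
    have hUnf : UnfairWin V0 V1 E π W v := by
      by_contra hc
      exact hvu' ⟨hvu, Or.inl hc⟩
    rcases hUnf.2.2 with ⟨hv0, hmem⟩ | ⟨hv1, _⟩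
    · exact Or.inr ⟨hv0, ⟨hUnf.1, Or.inr rfl⟩, by simpa using hmem⟩
    · exact Or.inl hv1
  refine ⟨σ, τ, fun v hv => hsub (hσ v hv), fun v hv => hsub (hτ v hv), ?_⟩
  apply Set.eq_univ_of_univ_subset
  rw [← hcover]
  exact Set.union_subset_union
    (winext V0 V1 E E' π W hW hd σ hσ hkey0)
    (winext V1 V0 E E' π Wᶜ hWc hd.symm τ hτ hkey1)
end

section
/- Let G = ⟨V₀,V₁,E,C,π,W⟩ be a two-player win/lose game with prefix-independent W, and let G⁻ = ⟨V₀,V₁,E⁻,C,π,W⟩ be obtained from G by removing all proper outgoing edges of the unfair-win vertices of G (thus making those vertices absorbing). Then for every Player-0 memoryless strategy σ of G⁻ (which is also a Player-0 memoryless strategy of G), W₀ᵐ(G⁻,σ) ⊆ W₀ᵐ(G,σ); symmetrically, for every Player-1 memoryless strategy τ of G⁻, W₁ᵐ(G⁻,τ) ⊆ W₁ᵐ(G,τ). -/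
lemma stmt3_key {V C : Type*} (Vi : Set V) (E E' : Set (V × V)) (π : V → C)
    (Win : Set (ℕ → C)) (hWin : PrefixIndependent Win)
    (σ : V → V) (hσ : IsStrategy Vi E' σ)
    (hcut : ∀ u w, (u, w) ∈ E → (u, w) ∉ E' →
      (u, u) ∈ E' ∧ (u ∉ Vi → (fun _ => π u) ∉ Win)) :
    WinRegion Vi E' π Win σ ⊆ WinRegion Vi E π Win σ := by
  classical
  intro v hv ρ h0 hrun hcomp
  by_cases hall : ∀ n, (ρ n, ρ (n + 1)) ∈ E'
  · exact hv ρ h0 hall hcomp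
  · push_neg at hall
    have hex : ∃ n, (ρ n, ρ (n + 1)) ∉ E' := hall
    set n := Nat.find hex with hn
    have hcutn : (ρ n, ρ (n + 1)) ∉ E' := Nat.find_spec hex
    have hmin : ∀ k, k < n → (ρ k, ρ (k + 1)) ∈ E' := fun k hk =>
      not_not.mp (Nat.find_min hex hk)
    have hnotVi : ρ n ∉ Vi := by
      intro hVi
      have h1 : ρ (n + 1) = σ (ρ n) := hcomp n hVi
      have h2 : (ρ n, σ (ρ n)) ∈ E' := hσ _ hVi
      rw [h1] at hcutn
      exact hcutn h2
    obtain ⟨hloop, hconst⟩ := hcut _ _ (hrun n) hcutn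
    have hnwin : (fun _ => π (ρ n)) ∉ Win := hconst hnotVi
    set ρ' : ℕ → V := fun k => ρ (min k n) with hρ'
    have hrun' : IsRun E' ρ' := by
      intro k
      rcases lt_or_ge k n with hk | hk
      · have h1 : min k n = k := min_eq_left hk.le
        have h2 : min (k + 1) n = k + 1 := min_eq_left hk
        simp only [hρ', h1, h2]
        exact hmin k hk
      · have h1 : min k n = n := min_eq_right hk
        have h2 : min (k + 1) n = n := min_eq_right (hk.trans (Nat.le_succ k))
        simp only [hρ', h1, h2]
        exact hloop
    have hcomp' : Compatible Vi σ ρ' := by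
      intro k hk
      rcases lt_or_ge k n with h | h
      · have h1 : min k n = k := min_eq_left h.le
        have h2 : min (k + 1) n = k + 1 := min_eq_left h
        simp only [hρ', h1, h2] at hk ⊢
        exact hcomp k hk
      · have h1 : min k n = n := min_eq_right h
        simp only [hρ', h1] at hk
        exact absurd hk hnotVi
    have h0' : ρ' 0 = v := by simp only [hρ', Nat.zero_min]; exact h0
    have hwin' : (fun k => π (ρ' k)) ∈ Win := hv ρ' h0' hrun' hcomp'
    have heq : (fun k => π (ρ' k)) =
        ListAppend (List.ofFn fun i : Fin n => π (ρ i)) (fun _ => π (ρ n)) := by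
      funext k
      simp only [ListAppend, List.length_ofFn, hρ']
      split_ifs with hh
      · simp only [List.get_ofFn, min_eq_left hh.le, Fin.cast]
      · rw [min_eq_right (le_of_not_gt hh)]
    rw [heq] at hwin'
    exact absurd ((hWin _ _).mp hwin') hnwin

/-- removing the proper outgoing edges of unfair-win vertices can
only shrink the winning region of any given memoryless strategy. -/
theorem stmt3 {V C : Type*} [Nonempty C]
    (V0 V1 : Set V) (E : Set (V × V)) (π : V → C) (W : Set (ℕ → C))
    (hdisj : Disjoint V0 V1) (hcover : V0 ∪ V1 = Set.univ)
    (hE : ∀ v : V, ∃ u, (v, u) ∈ E)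
    (hW : PrefixIndependent W)
    (E' : Set (V × V))
    (hE' : E' = E \ {p | UnfairWin V0 V1 E π W p.1 ∧ p.2 ≠ p.1}) :
    (∀ σ, IsStrategy V0 E' σ → WinRegion V0 E' π W σ ⊆ WinRegion V0 E π W σ) ∧
    (∀ τ, IsStrategy V1 E' τ → WinRegion V1 E' π Wᶜ τ ⊆ WinRegion V1 E π Wᶜ τ) := by
  have hWc : PrefixIndependent Wᶜ := by
    intro w ρ
    simp only [Set.mem_compl_iff, not_iff_not]
    exact hW w ρ
  have hmem : ∀ u : V, u ∈ V0 ∪ V1 := by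
    intro u; rw [hcover]; trivial
  constructor
  · intro σ hσ
    refine stmt3_key V0 E E' π W hW σ hσ ?_
    intro u w hEuw hE'uw
    have hbad : UnfairWin V0 V1 E π W u ∧ w ≠ u := by
      by_contra h
      exact hE'uw (hE' ▸ ⟨hEuw, h⟩)
    obtain ⟨⟨hloopE, _, hdisjn⟩, hne⟩ := hbad
    have hloopE' : (u, u) ∈ E' := by
      rw [hE']
      exact ⟨hloopE, fun h => h.2 rfl⟩
    refine ⟨hloopE', fun hu0 => ?_⟩
    rcases hdisjn with ⟨hu, _⟩ | ⟨_, hnw⟩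
    · exact absurd hu hu0
    · exact hnw
  · intro τ hτ
    refine stmt3_key V1 E E' π Wᶜ hWc τ hτ ?_
    intro u w hEuw hE'uw
    have hbad : UnfairWin V0 V1 E π W u ∧ w ≠ u := by
      by_contra h
      exact hE'uw (hE' ▸ ⟨hEuw, h⟩)
    obtain ⟨⟨hloopE, _, hdisjn⟩, hne⟩ := hbad
    have hloopE' : (u, u) ∈ E' := by
      rw [hE']
      exact ⟨hloopE, fun h => h.2 rfl⟩
    refine ⟨hloopE', fun hu1 => ?_⟩
    rcases hdisjn with ⟨_, hw⟩ | ⟨hu, _⟩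
    · simpa using hw
    · exact absurd hu hu1
end

section
/- If every parity game with finitely many priorities in which only absorbing vertices have self-loops is uniformly memoryless determined, then every parity game with finitely many priorities is uniformly memoryless determined. -/
/-- The set of values occurring infinitely often in `u`. -/
def InfOcc (u : ℕ → ℕ) : Set ℕ := {k | ∀ N, ∃ n, N ≤ n ∧ u n = k}

/-- `max_∞(u)`: the maximal value occurring infinitely often (as `sSup`,
well defined for bounded `u`). -/
noncomputable def MaxInf (u : ℕ → ℕ) : ℕ := sSup (InfOcc u)

/-- The parity winning condition for Player 0: `max_∞` is even. -/
def ParityWin : Set (ℕ → ℕ) := {u | Even (MaxInf u)}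

/-- A vertex is absorbing if its only outgoing edge is a self-loop. -/
def Absorbing {V : Type*} (E : Set (V × V)) (v : V) : Prop :=
  {u | (v, u) ∈ E} = {v}

/-- A vertex is vanishing if it has no incoming edge. -/
def Vanishing {V : Type*} (E : Set (V × V)) (v : V) : Prop :=
  ∀ u, (u, v) ∉ E

/-- A vertex is relevant if it is neither absorbing nor vanishing. -/
def Relevant {V : Type*} (E : Set (V × V)) (v : V) : Prop :=
  ¬ Absorbing E v ∧ ¬ Vanishing E v

section StmtAux

attribute [local instance] Classical.propDecidable

variable {V : Type}

def E2 (E : Set (V × V)) : Set ((V ⊕ V) × (V ⊕ V)) :=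
  {p | match p with
    | (Sum.inl v, Sum.inl u) => (v, u) ∈ E ∧ (u ≠ v ∨ Absorbing E v)
    | (Sum.inl v, Sum.inr u) => u = v ∧ (v, v) ∈ E ∧ ¬ Absorbing E v
    | (Sum.inr v, Sum.inl u) => u = v
    | (Sum.inr _, Sum.inr _) => False}

lemma mem_E2_ll {E : Set (V × V)} {v u : V} :
    (Sum.inl v, Sum.inl u) ∈ E2 E ↔ (v, u) ∈ E ∧ (u ≠ v ∨ Absorbing E v) := Iff.rfl
lemma mem_E2_lr {E : Set (V × V)} {v u : V} :
    (Sum.inl v, Sum.inr u) ∈ E2 E ↔ u = v ∧ (v, v) ∈ E ∧ ¬ Absorbing E v := Iff.rfl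
lemma mem_E2_rl {E : Set (V × V)} {v u : V} :
    (Sum.inr v, Sum.inl u) ∈ E2 E ↔ u = v := Iff.rfl
lemma mem_E2_rr {E : Set (V × V)} {v u : V} :
    (Sum.inr v, Sum.inr u) ∈ E2 E ↔ False := Iff.rfl

def dd (E : Set (V × V)) (ρ : ℕ → V) (n : ℕ) : Prop :=
  ρ (n + 1) = ρ n ∧ ¬ Absorbing E (ρ n)

noncomputable def ss (E : Set (V × V)) (ρ : ℕ → V) : ℕ → ℕ × Bool
  | 0 => (0, false)
  | k + 1 =>
    if (ss E ρ k).2 then ((ss E ρ k).1 + 1, false)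
    else if dd E ρ (ss E ρ k).1 then ((ss E ρ k).1, true)
    else ((ss E ρ k).1 + 1, false)

lemma ss_succ (E : Set (V × V)) (ρ : ℕ → V) (k : ℕ) :
    ss E ρ (k + 1) =
      if (ss E ρ k).2 then ((ss E ρ k).1 + 1, false)
      else if dd E ρ (ss E ρ k).1 then ((ss E ρ k).1, true)
      else ((ss E ρ k).1 + 1, false) := rfl

lemma ss_snd_dd (E : Set (V × V)) (ρ : ℕ → V) :
    ∀ k, (ss E ρ k).2 = true → dd E ρ (ss E ρ k).1 := by
  intro k
  induction k with
  | zero => simp [ss]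
  | succ k ih =>
    rw [ss_succ]
    split_ifs with h1 h2
    · simp
    · exact fun _ => h2
    · simp


lemma ss_fst_succ_cases (E : Set (V × V)) (ρ : ℕ → V) (k : ℕ) :
    (ss E ρ (k + 1)).1 = (ss E ρ k).1 ∨ (ss E ρ (k + 1)).1 = (ss E ρ k).1 + 1 := by
  rw [ss_succ]; split_ifs <;> simp

lemma ss_fst_mono (E : Set (V × V)) (ρ : ℕ → V) :
    Monotone fun k => (ss E ρ k).1 := by
  apply monotone_nat_of_le_succ
  intro k
  rcases ss_fst_succ_cases E ρ k with h | h <;> omega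

lemma ss_fst_le (E : Set (V × V)) (ρ : ℕ → V) : ∀ k, (ss E ρ k).1 ≤ k := by
  intro k
  induction k with
  | zero => simp [ss]
  | succ k ih => rcases ss_fst_succ_cases E ρ k with h | h <;> omega

lemma ss_fst_two_step (E : Set (V × V)) (ρ : ℕ → V) (k : ℕ) :
    (ss E ρ k).1 + 1 ≤ (ss E ρ (k + 2)).1 := by
  by_cases hb : (ss E ρ k).2 = true
  · have h1 : (ss E ρ (k + 1)).1 = (ss E ρ k).1 + 1 := by rw [ss_succ, if_pos hb]
    have h3 : (ss E ρ (k + 1)).1 ≤ (ss E ρ (k + 2)).1 :=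
      ss_fst_mono E ρ (Nat.le_succ (k + 1))
    omega
  · by_cases hd : dd E ρ (ss E ρ k).1
    · have h1 : ss E ρ (k + 1) = ((ss E ρ k).1, true) := by
        rw [ss_succ, if_neg hb, if_pos hd]
      have h2 : (ss E ρ (k + 2)).1 = (ss E ρ (k + 1)).1 + 1 := by
        rw [show k + 2 = (k + 1) + 1 from rfl, ss_succ, if_pos (by rw [h1])]
      rw [h1] at h2; omega
    · have h1 : (ss E ρ (k + 1)).1 = (ss E ρ k).1 + 1 := by
        rw [ss_succ, if_neg hb, if_neg hd]
      have h3 : (ss E ρ (k + 1)).1 ≤ (ss E ρ (k + 2)).1 :=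
        ss_fst_mono E ρ (Nat.le_succ (k + 1))
      omega

lemma le_ss_fst (E : Set (V × V)) (ρ : ℕ → V) : ∀ n, n ≤ (ss E ρ (2 * n)).1 := by
  intro n
  induction n with
  | zero => simp
  | succ n ih =>
    have := ss_fst_two_step E ρ (2 * n)
    have h2 : 2 * (n + 1) = 2 * n + 2 := by ring
    rw [h2]; omega

lemma exists_ss_fst (E : Set (V × V)) (ρ : ℕ → V) (n : ℕ) :
    ∃ k, (ss E ρ k).1 = n ∧ n ≤ k := by
  have hex : ∃ k, n ≤ (ss E ρ k).1 := ⟨2 * n, le_ss_fst E ρ n⟩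
  rcases hk : Nat.find hex with _ | m
  · have h1 := Nat.find_spec hex
    rw [hk] at h1
    have h0 : (ss E ρ 0).1 = 0 := rfl
    refine ⟨0, by omega, by omega⟩
  · have h1 := Nat.find_spec hex
    rw [hk] at h1
    have h2 : ¬ n ≤ (ss E ρ m).1 := Nat.find_min hex (by omega)
    have h3 := ss_fst_succ_cases E ρ m
    have h4 : (ss E ρ (m + 1)).1 = n := by omega
    exact ⟨m + 1, h4, by have := ss_fst_le E ρ (m + 1); omega⟩

lemma infOcc_comp (E : Set (V × V)) (ρ : ℕ → V) (u : ℕ → ℕ) :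
    InfOcc (fun k => u ((ss E ρ k).1)) = InfOcc u := by
  ext c
  constructor
  · intro hc N
    obtain ⟨k, hk, he⟩ := hc (2 * N)
    exact ⟨(ss E ρ k).1, le_trans (le_ss_fst E ρ N) (ss_fst_mono E ρ hk), he⟩
  · intro hc N
    obtain ⟨n, hn, he⟩ := hc N
    obtain ⟨k, hk1, hk2⟩ := exists_ss_fst E ρ n
    exact ⟨k, le_trans hn hk2, by show u (ss E ρ k).1 = c; rw [hk1]; exact he⟩


noncomputable def run2 (E : Set (V × V)) (ρ : ℕ → V) (k : ℕ) : V ⊕ V :=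
  if (ss E ρ k).2 then Sum.inr (ρ (ss E ρ k).1) else Sum.inl (ρ (ss E ρ k).1)

noncomputable def pull (σ' : V ⊕ V → V ⊕ V) (v : V) : V :=
  match σ' (Sum.inl v) with
  | Sum.inl u => u
  | Sum.inr _ => v

lemma color_run2 (E : Set (V × V)) (ρ : ℕ → V) (π : V → ℕ) (k : ℕ) :
    Sum.elim π π (run2 E ρ k) = π (ρ (ss E ρ k).1) := by
  unfold run2; split_ifs <;> rfl

lemma run2_zero (E : Set (V × V)) (ρ : ℕ → V) : run2 E ρ 0 = Sum.inl (ρ 0) := rfl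

lemma isRun_run2 (E : Set (V × V)) (ρ : ℕ → V) (hρ : IsRun E ρ) :
    IsRun (E2 E) (run2 E ρ) := by
  intro k
  by_cases hb : (ss E ρ k).2 = true
  · have hd := ss_snd_dd E ρ k hb
    have h1 : run2 E ρ k = Sum.inr (ρ (ss E ρ k).1) := by simp [run2, hb]
    have h2 : ss E ρ (k + 1) = ((ss E ρ k).1 + 1, false) := by rw [ss_succ, if_pos hb]
    have h3 : run2 E ρ (k + 1) = Sum.inl (ρ ((ss E ρ k).1 + 1)) := by simp [run2, h2]
    rw [h1, h3, mem_E2_rl]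
    exact hd.1
  · have h1 : run2 E ρ k = Sum.inl (ρ (ss E ρ k).1) := by simp [run2, hb]
    by_cases hd : dd E ρ (ss E ρ k).1
    · have h2 : ss E ρ (k + 1) = ((ss E ρ k).1, true) := by
        rw [ss_succ, if_neg hb, if_pos hd]
      have h3 : run2 E ρ (k + 1) = Sum.inr (ρ (ss E ρ k).1) := by simp [run2, h2]
      rw [h1, h3, mem_E2_lr]
      have he := hρ (ss E ρ k).1
      rw [hd.1] at he
      exact ⟨rfl, he, hd.2⟩
    · have h2 : ss E ρ (k + 1) = ((ss E ρ k).1 + 1, false) := by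
        rw [ss_succ, if_neg hb, if_neg hd]
      have h3 : run2 E ρ (k + 1) = Sum.inl (ρ ((ss E ρ k).1 + 1)) := by simp [run2, h2]
      rw [h1, h3, mem_E2_ll]
      refine ⟨hρ _, ?_⟩
      by_cases he : ρ ((ss E ρ k).1 + 1) = ρ (ss E ρ k).1
      · right
        by_contra ha
        exact hd ⟨he, ha⟩
      · exact Or.inl he

lemma isStrategy_pull (E : Set (V × V)) (Vi : Set V) (Vi' : Set (V ⊕ V))
    (hsub : ∀ v ∈ Vi, Sum.inl v ∈ Vi') (σ' : V ⊕ V → V ⊕ V)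
    (hstrat : IsStrategy Vi' (E2 E) σ') : IsStrategy Vi E (pull σ') := by
  intro v hv
  have hedge := hstrat _ (hsub v hv)
  rcases hσ : σ' (Sum.inl v) with u | u <;> rw [hσ] at hedge
  · have hp : pull σ' v = u := by unfold pull; rw [hσ]
    rw [hp]; exact hedge.1
  · have hp : pull σ' v = v := by unfold pull; rw [hσ]
    rw [hp]; exact hedge.2.1

lemma compat_run2 (E : Set (V × V)) (ρ : ℕ → V) (Vi : Set V) (Vi' : Set (V ⊕ V))
    (hsub : ∀ v, Sum.inl v ∈ Vi' → v ∈ Vi) (σ' : V ⊕ V → V ⊕ V)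
    (hstrat : IsStrategy Vi' (E2 E) σ')
    (hc : Compatible Vi (pull σ') ρ) :
    Compatible Vi' σ' (run2 E ρ) := by
  intro k hk
  by_cases hb : (ss E ρ k).2 = true
  · have hd := ss_snd_dd E ρ k hb
    have h1 : run2 E ρ k = Sum.inr (ρ (ss E ρ k).1) := by simp [run2, hb]
    have h2 : ss E ρ (k + 1) = ((ss E ρ k).1 + 1, false) := by rw [ss_succ, if_pos hb]
    have h3 : run2 E ρ (k + 1) = Sum.inl (ρ ((ss E ρ k).1 + 1)) := by simp [run2, h2]
    rw [h1] at hk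
    have hedge := hstrat _ hk
    rw [h1, h3]
    rcases hσ : σ' (Sum.inr (ρ (ss E ρ k).1)) with u | u <;> rw [hσ] at hedge
    · rw [mem_E2_rl] at hedge
      rw [hedge, hd.1]
    · exact (mem_E2_rr.mp hedge).elim
  · have h1 : run2 E ρ k = Sum.inl (ρ (ss E ρ k).1) := by simp [run2, hb]
    rw [h1] at hk
    have hv : ρ (ss E ρ k).1 ∈ Vi := hsub _ hk
    have hedge := hstrat _ hk
    have hpull := hc (ss E ρ k).1 hv
    rw [h1]
    by_cases hd : dd E ρ (ss E ρ k).1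
    · have h2 : ss E ρ (k + 1) = ((ss E ρ k).1, true) := by
        rw [ss_succ, if_neg hb, if_pos hd]
      have h3 : run2 E ρ (k + 1) = Sum.inr (ρ (ss E ρ k).1) := by simp [run2, h2]
      rw [h3]
      rcases hσ : σ' (Sum.inl (ρ (ss E ρ k).1)) with u | u <;> rw [hσ] at hedge
      · exfalso
        rw [mem_E2_ll] at hedge
        have hp : pull σ' (ρ (ss E ρ k).1) = u := by unfold pull; rw [hσ]
        rw [hp] at hpull
        have hu : u = ρ (ss E ρ k).1 := by rw [← hpull]; exact hd.1
        exact hd.2 (hedge.2.resolve_left (fun hne => hne hu))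
      · rw [mem_E2_lr] at hedge
        rw [hedge.1]
    · have h2 : ss E ρ (k + 1) = ((ss E ρ k).1 + 1, false) := by
        rw [ss_succ, if_neg hb, if_neg hd]
      have h3 : run2 E ρ (k + 1) = Sum.inl (ρ ((ss E ρ k).1 + 1)) := by simp [run2, h2]
      rw [h3]
      rcases hσ : σ' (Sum.inl (ρ (ss E ρ k).1)) with u | u <;> rw [hσ] at hedge
      · have hp : pull σ' (ρ (ss E ρ k).1) = u := by unfold pull; rw [hσ]
        rw [hp] at hpull
        rw [hpull]
      · exfalso
        rw [mem_E2_lr] at hedge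
        have hp : pull σ' (ρ (ss E ρ k).1) = ρ (ss E ρ k).1 := by unfold pull; rw [hσ]
        rw [hp] at hpull
        exact hd ⟨hpull, hedge.2.2⟩

lemma E2_succ_exists (E : Set (V × V)) (hE : ∀ v, ∃ u, (v, u) ∈ E) :
    ∀ x : V ⊕ V, ∃ y, (x, y) ∈ E2 E := by
  rintro (v | v)
  · obtain ⟨u, hu⟩ := hE v
    by_cases he : u = v
    · subst he
      by_cases ha : Absorbing E u
      · exact ⟨Sum.inl u, mem_E2_ll.mpr ⟨hu, Or.inr ha⟩⟩
      · exact ⟨Sum.inr u, mem_E2_lr.mpr ⟨rfl, hu, ha⟩⟩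
    · exact ⟨Sum.inl u, mem_E2_ll.mpr ⟨hu, Or.inl he⟩⟩
  · exact ⟨Sum.inl v, mem_E2_rl.mpr rfl⟩

lemma E2_selfloop (E : Set (V × V)) :
    ∀ x : V ⊕ V, (x, x) ∈ E2 E → Absorbing (E2 E) x := by
  rintro (v | v) hx
  · rw [mem_E2_ll] at hx
    have ha : Absorbing E v := hx.2.resolve_left (fun hne => hne rfl)
    unfold Absorbing
    ext (u | u)
    · simp only [Set.mem_setOf_eq, Set.mem_singleton_iff, mem_E2_ll]
      constructor
      · rintro ⟨h1, _⟩
        have h2 : u ∈ ({v} : Set V) := by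
          rw [← ha]; exact h1
        rw [Set.mem_singleton_iff] at h2
        rw [h2]
      · rintro h2
        rw [Sum.inl.injEq] at h2
        rw [h2]
        exact ⟨hx.1, Or.inr ha⟩
    · simp only [Set.mem_setOf_eq, Set.mem_singleton_iff, mem_E2_lr]
      constructor
      · rintro ⟨_, _, hna⟩; exact absurd ha hna
      · intro h2; exact absurd h2 (by simp)
  · exact absurd hx (by rw [mem_E2_rr]; exact not_false)

end StmtAux


/-- if all parity games in which only absorbing vertices have
self-loops are uniformly memoryless determined, so are all parity games. -/
theorem stmt5
    (h : ∀ (V : Type) (V0 V1 : Set V) (E : Set (V × V)) (π : V → ℕ),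
      Disjoint V0 V1 → V0 ∪ V1 = Set.univ → (∀ v, ∃ u, (v, u) ∈ E) →
      (∃ B, ∀ v, π v ≤ B) →
      (∀ v, (v, v) ∈ E → Absorbing E v) →
      UniformlyDetermined V0 V1 E π ParityWin) :
    ∀ (V : Type) (V0 V1 : Set V) (E : Set (V × V)) (π : V → ℕ),
      Disjoint V0 V1 → V0 ∪ V1 = Set.univ → (∀ v, ∃ u, (v, u) ∈ E) →
      (∃ B, ∀ v, π v ≤ B) →
      UniformlyDetermined V0 V1 E π ParityWin := by
  intro V V0 V1 E π hdisj hcover hsucc hbdd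
  obtain ⟨B, hB⟩ := hbdd
  set V0' : Set (V ⊕ V) := Sum.inl '' V0 ∪ Set.range Sum.inr with hV0'
  set V1' : Set (V ⊕ V) := Sum.inl '' V1 with hV1'
  have hdisj' : Disjoint V0' V1' := by
    rw [Set.disjoint_left]
    rintro x (⟨v, hv, rfl⟩ | ⟨v, rfl⟩) ⟨w, hw, hwx⟩
    · rw [Sum.inl.injEq] at hwx
      subst hwx
      exact (Set.disjoint_left.mp hdisj hv) hw
    · exact absurd hwx (by simp)
  have hcover' : V0' ∪ V1' = Set.univ := by
    rw [Set.eq_univ_iff_forall]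
    rintro (v | v)
    · have hv : v ∈ V0 ∪ V1 := hcover ▸ Set.mem_univ v
      rcases hv with hv | hv
      · exact Or.inl (Or.inl ⟨v, hv, rfl⟩)
      · exact Or.inr ⟨v, hv, rfl⟩
    · exact Or.inl (Or.inr ⟨v, rfl⟩)
  obtain ⟨σ', τ', hσ's, hτ's, huniv⟩ :=
    h (V ⊕ V) V0' V1' (E2 E) (Sum.elim π π) hdisj' hcover' (E2_succ_exists E hsucc)
      ⟨B, by rintro (v | v) <;> exact hB v⟩ (E2_selfloop E)
  have hsub0 : ∀ v, Sum.inl v ∈ V0' → v ∈ V0 := by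
    rintro v (⟨w, hw, hwx⟩ | ⟨w, hwx⟩)
    · rw [Sum.inl.injEq] at hwx; subst hwx; exact hw
    · exact absurd hwx (by simp)
  have hsub1 : ∀ v, Sum.inl v ∈ V1' → v ∈ V1 := by
    rintro v ⟨w, hw, hwx⟩
    rw [Sum.inl.injEq] at hwx; subst hwx; exact hw
  refine ⟨pull σ', pull τ',
    isStrategy_pull E V0 V0' (fun v hv => Or.inl ⟨v, hv, rfl⟩) σ' hσ's,
    isStrategy_pull E V1 V1' (fun v hv => ⟨v, hv, rfl⟩) τ' hτ's, ?_⟩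
  rw [Set.eq_univ_iff_forall]
  intro v
  have hx : Sum.inl v ∈ WinRegion V0' (E2 E) (Sum.elim π π) ParityWin σ' ∪
      WinRegion V1' (E2 E) (Sum.elim π π) ParityWinᶜ τ' := by
    rw [huniv]; trivial
  have key : ∀ ρ : ℕ → V, MaxInf (fun k => Sum.elim π π (run2 E ρ k)) =
      MaxInf (fun n => π (ρ n)) := by
    intro ρ
    have hc : (fun k => Sum.elim π π (run2 E ρ k)) =
        fun k => (fun n => π (ρ n)) ((ss E ρ k).1) := by
      funext k; exact color_run2 E ρ π k
    unfold MaxInf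
    rw [hc, infOcc_comp E ρ (fun n => π (ρ n))]
  rcases hx with hx | hx
  · left
    intro ρ h0 hrun hcomp
    have hw := hx (run2 E ρ) (by rw [run2_zero, h0]) (isRun_run2 E ρ hrun)
      (compat_run2 E ρ V0 V0' hsub0 σ' hσ's hcomp)
    have hw2 : Even (MaxInf fun k => Sum.elim π π (run2 E ρ k)) := hw
    show Even (MaxInf fun n => π (ρ n))
    rw [← key ρ]
    exact hw2
  · right
    intro ρ h0 hrun hcomp
    have hw := hx (run2 E ρ) (by rw [run2_zero, h0]) (isRun_run2 E ρ hrun)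
      (compat_run2 E ρ V1 V1' hsub1 τ' hτ's hcomp)
    have hw2 : ¬ Even (MaxInf fun k => Sum.elim π π (run2 E ρ k)) := hw
    show ¬ Even (MaxInf fun n => π (ρ n))
    rw [← key ρ]
    exact hw2
end

section
/- Let G = ⟨V₀,V₁,E,π⟩ be a parity game with finitely many priorities, and let G⁻ = ⟨V₀,V₁,E⁻,π⟩ be obtained from G by removing all useless self-loops. Then for every Player-0 memoryless strategy σ of G⁻ (which is also a strategy of G), W₀ᵐ(G⁻,σ) ⊆ W₀ᵐ(G,σ); symmetrically, for every Player-1 memoryless strategy τ of G⁻, W₁ᵐ(G⁻,τ) ⊆ W₁ᵐ(G,τ). -/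
/-- A useless self-loop in a parity game: `v` also has a proper outgoing edge
and the priority of `v` has the parity losing for its controller. -/
def UselessLoop {V : Type*} (V0 V1 : Set V) (E : Set (V × V)) (π : V → ℕ) (v : V) : Prop :=
  (v, v) ∈ E ∧ (∃ u, u ≠ v ∧ (v, u) ∈ E) ∧
    ((v ∈ V0 ∧ Odd (π v)) ∨ (v ∈ V1 ∧ Even (π v)))

lemma maxInf_eventually_const (u : ℕ → ℕ) (c : ℕ) (N : ℕ)
    (h : ∀ n, N ≤ n → u n = c) : MaxInf u = c := by
  have hset : InfOcc u = {c} := by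
    ext k
    constructor
    · intro hk
      obtain ⟨n, hn, hun⟩ := hk N
      simp only [Set.mem_singleton_iff]
      rw [← hun, h n hn]
    · intro hk
      rw [Set.mem_singleton_iff] at hk
      subst hk
      intro M
      exact ⟨max M N, le_max_left _ _, h _ (le_max_right _ _)⟩
  rw [MaxInf, hset, csSup_singleton]

/-- Key lemma: if all edges removed from `E` are self-loops, the winning
condition only depends on the colors occurring infinitely often, and any run
eventually stuck on a removed loop at an opponent vertex is winning, then the
winning region of a strategy of the smaller game shrinks. -/
lemma key_shrink {V : Type*} (Vi : Set V) (E E' : Set (V × V)) (π : V → ℕ)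
    (Win : Set (ℕ → ℕ))
    (hdiff : ∀ p ∈ E, p ∉ E' → p.2 = p.1)
    (hinv : ∀ u u' : ℕ → ℕ, InfOcc u = InfOcc u' → (u ∈ Win ↔ u' ∈ Win))
    (hconst : ∀ w, (w, w) ∈ E → (w, w) ∉ E' → w ∉ Vi →
      ∀ u : ℕ → ℕ, (∃ N, ∀ n, N ≤ n → u n = π w) → u ∈ Win)
    (σ : V → V) (hσ : IsStrategy Vi E' σ) :
    WinRegion Vi E' π Win σ ⊆ WinRegion Vi E π Win σ := by
  intro v hv ρ h0 hrun hcomp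
  classical
  by_cases hA : ∃ N, ∀ n, N ≤ n → (ρ n, ρ (n + 1)) ∉ E'
  · obtain ⟨N, hN⟩ := hA
    have hstep : ∀ n, N ≤ n → ρ (n + 1) = ρ n := fun n hn =>
      hdiff _ (hrun n) (hN n hn)
    have hc : ∀ n, N ≤ n → ρ n = ρ N := by
      intro n hn
      induction n, hn using Nat.le_induction with
      | base => rfl
      | succ n hn ih => rw [hstep n hn, ih]
    have hloopE : (ρ N, ρ N) ∈ E := by
      have := hrun N
      rwa [hstep N le_rfl] at this
    have hloopE' : (ρ N, ρ N) ∉ E' := by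
      have := hN N le_rfl
      rwa [hstep N le_rfl] at this
    have hnotVi : ρ N ∉ Vi := by
      intro hw
      have h1 := hcomp N hw
      rw [hstep N le_rfl] at h1
      have := hσ (ρ N) hw
      rw [← h1] at this
      exact hloopE' this
    exact hconst (ρ N) hloopE hloopE' hnotVi _
      ⟨N, fun n hn => by rw [hc n hn]⟩
  · push_neg at hA
    have hB : ∀ N, ∃ n, N ≤ n ∧ (ρ n, ρ (n + 1)) ∈ E' := hA
    have hfind : ∀ m : ℕ, {n : ℕ // m ≤ n ∧ (ρ n, ρ (n + 1)) ∈ E' ∧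
        ∀ l, m ≤ l → l < n → (ρ l, ρ (l + 1)) ∉ E'} := by
      intro m
      have hd : DecidablePred fun n => m ≤ n ∧ (ρ n, ρ (n + 1)) ∈ E' :=
        fun n => Classical.propDecidable _
      refine ⟨@Nat.find _ hd (hB m), (@Nat.find_spec _ hd (hB m)).1,
        (@Nat.find_spec _ hd (hB m)).2, ?_⟩
      intro l hml hl hkept
      exact @Nat.find_min _ hd (hB m) l hl ⟨hml, hkept⟩
    -- g enumerates positions just after kept steps
    let g : ℕ → ℕ := fun k => Nat.rec 0 (fun _ m => (hfind m).1 + 1) k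
    let nk : ℕ → ℕ := fun k => (hfind (g k)).1
    have hg0 : g 0 = 0 := rfl
    have hgs : ∀ k, g (k + 1) = nk k + 1 := fun k => rfl
    have hspec : ∀ k, g k ≤ nk k ∧ (ρ (nk k), ρ (nk k + 1)) ∈ E' :=
      fun k => ⟨(hfind (g k)).2.1, (hfind (g k)).2.2.1⟩
    have hmin : ∀ k m, m < nk k → ¬(g k ≤ m ∧ (ρ m, ρ (m + 1)) ∈ E') :=
      fun k m hm h => (hfind (g k)).2.2.2 m h.1 hm h.2
    have hblock : ∀ k m, g k ≤ m → m ≤ nk k → ρ m = ρ (g k) := by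
      intro k m hm hmk
      induction m, hm using Nat.le_induction with
      | base => rfl
      | succ m hm ih =>
        have hmlt : m < nk k := lt_of_lt_of_le (Nat.lt_succ_self m) hmk
        have hnkept : (ρ m, ρ (m + 1)) ∉ E' := fun h => hmin k m hmlt ⟨hm, h⟩
        have h2 : ρ (m + 1) = ρ m := hdiff _ (hrun m) hnkept
        rw [h2, ih (le_of_lt hmlt)]
    have hmono : StrictMono g := by
      apply strictMono_nat_of_lt_succ
      intro k
      rw [hgs k]
      exact Nat.lt_succ_of_le (hspec k).1
    have hρnk : ∀ k, ρ (nk k) = ρ (g k) := fun k =>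
      hblock k (nk k) (hspec k).1 le_rfl
    set ρ' : ℕ → V := fun k => ρ (g k) with hρ'
    have h0' : ρ' 0 = v := h0
    have hrun' : IsRun E' ρ' := by
      intro k
      show (ρ (g k), ρ (g (k + 1))) ∈ E'
      rw [hgs k, ← hρnk k]
      exact (hspec k).2
    have hcomp' : Compatible Vi σ ρ' := by
      intro k hk
      show ρ (g (k + 1)) = σ (ρ (g k))
      rw [hgs k, ← hρnk k]
      apply hcomp
      rw [hρnk k]
      exact hk
    have hwin' : (fun n => π (ρ' n)) ∈ Win := hv ρ' h0' hrun' hcomp'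
    have hcover' : ∀ n, ∃ k, g k ≤ n ∧ n ≤ nk k := by
      intro n
      induction n with
      | zero => exact ⟨0, Nat.le_refl 0, Nat.zero_le _⟩
      | succ n ih =>
        obtain ⟨k, hk1, hk2⟩ := ih
        by_cases h : n + 1 ≤ nk k
        · exact ⟨k, le_trans hk1 (Nat.le_succ n), h⟩
        · have hnkn : nk k = n := le_antisymm (by omega) hk2
          have hg : g (k + 1) = n + 1 := by rw [hgs k, hnkn]
          exact ⟨k + 1, hg.le, by rw [← hg]; exact (hspec (k + 1)).1⟩
    have hEq : InfOcc (fun n => π (ρ n)) = InfOcc (fun n => π (ρ' n)) := by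
      ext c
      constructor
      · intro hc N
        obtain ⟨n, hn, hπ⟩ := hc (g N)
        obtain ⟨k, hk1, hk2⟩ := hcover' n
        have hρn : ρ n = ρ (g k) := hblock k n hk1 hk2
        have hkN : N ≤ k := by
          by_contra hlt
          push_neg at hlt
          have h1 : g (k + 1) ≤ g N := hmono.monotone (Nat.succ_le_of_lt hlt)
          rw [hgs k] at h1
          omega
        exact ⟨k, hkN, by show π (ρ (g k)) = c; rw [← hρn]; exact hπ⟩
      · intro hc N
        obtain ⟨k, hk, hπ⟩ := hc N
        exact ⟨g k, le_trans hk (hmono.le_apply), hπ⟩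
    exact (hinv _ _ hEq).mpr hwin'

/-- removing useless self-loops can only shrink the winning region
of any given memoryless strategy. -/
theorem stmt6 {V : Type*} (V0 V1 : Set V) (E : Set (V × V)) (π : V → ℕ)
    (hdisj : Disjoint V0 V1) (hcover : V0 ∪ V1 = Set.univ)
    (hE : ∀ v : V, ∃ u, (v, u) ∈ E)
    (hbdd : ∃ B, ∀ v, π v ≤ B)
    (E' : Set (V × V))
    (hE' : E' = E \ {p | p.2 = p.1 ∧ UselessLoop V0 V1 E π p.1}) :
    (∀ σ, IsStrategy V0 E' σ →
      WinRegion V0 E' π ParityWin σ ⊆ WinRegion V0 E π ParityWin σ) ∧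
    (∀ τ, IsStrategy V1 E' τ →
      WinRegion V1 E' π ParityWinᶜ τ ⊆ WinRegion V1 E π ParityWinᶜ τ) := by
  subst hE'
  have hdiff : ∀ p ∈ E, p ∉ E \ {p : V × V | p.2 = p.1 ∧ UselessLoop V0 V1 E π p.1} →
      p.2 = p.1 := by
    intro p hp hp'
    have hmem : p ∈ {p : V × V | p.2 = p.1 ∧ UselessLoop V0 V1 E π p.1} := by
      by_contra h
      exact hp' ⟨hp, h⟩
    exact hmem.1
  have huse : ∀ w : V, (w, w) ∈ E →
      (w, w) ∉ E \ {p : V × V | p.2 = p.1 ∧ UselessLoop V0 V1 E π p.1} →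
      UselessLoop V0 V1 E π w := by
    intro w hw hw'
    by_contra h
    exact hw' ⟨hw, fun hs => h hs.2⟩
  constructor
  · intro σ hσ
    apply key_shrink V0 E _ π ParityWin hdiff
    · intro u u' h
      show Even (MaxInf u) ↔ Even (MaxInf u')
      rw [MaxInf, MaxInf, h]
    · intro w hwE hwE' hw u hu
      obtain ⟨_, _, hor⟩ := huse w hwE hwE'
      rcases hor with ⟨h1, _⟩ | ⟨_, h2⟩
      · exact absurd h1 hw
      · obtain ⟨N, hN⟩ := hu
        show Even (MaxInf u)
        rw [maxInf_eventually_const u (π w) N hN]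
        exact h2
    · exact hσ
  · intro τ hτ
    apply key_shrink V1 E _ π ParityWinᶜ hdiff
    · intro u u' h
      show ¬Even (MaxInf u) ↔ ¬Even (MaxInf u')
      rw [MaxInf, MaxInf, h]
    · intro w hwE hwE' hw u hu
      obtain ⟨_, _, hor⟩ := huse w hwE hwE'
      rcases hor with ⟨_, h1⟩ | ⟨h2, _⟩
      · obtain ⟨N, hN⟩ := hu
        show ¬Even (MaxInf u)
        rw [maxInf_eventually_const u (π w) N hN]
        exact (Nat.not_even_iff_odd).mpr h1
      · exact absurd h2 hw
    · exact hτ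
end

section
/- For every parity game with finitely many priorities whose vertex set V is nonempty, W₀ᵐ(G) ∪ W₁ᵐ(G) ≠ ∅; that is, at least one vertex is won by some player using a memoryless strategy. -/
/-!
Zielonka's induction on the number of priorities, in the transfinite form needed for
arbitrary arenas; it shows that every vertex is won positionally by one of the players.
Let `p` be the top priority and `P` the player it favours. If the opponent wins nowhere,
`P` wins everywhere with a single strategy: outside `P`'s attractor to priority `p` the
game has fewer priorities, so by induction `P` wins there everywhere, and a play that uses
the attractor strategy inside the attractor and that strategy outside it either sees `p`
infinitely often or eventually stays outside. In general, the opponent's winning region `X`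
is closed under controllable predecessors, so the rest of the arena is a subgame that the
opponent cannot leave and where it wins nowhere; hence `P` wins all of it.
-/

universe u

open Set OrdinalApprox

section Sequences

theorem infOcc_comp_add (u : ℕ → ℕ) (k : ℕ) : InfOcc (fun n => u (n + k)) = InfOcc u := by
  ext m
  constructor
  · intro h N
    obtain ⟨n, hn, hm⟩ := h N
    exact ⟨n + k, by omega, hm⟩
  · intro h N
    obtain ⟨n, hn, hm⟩ := h (N + k)
    refine ⟨n - k, by omega, ?_⟩
    show u (n - k + k) = m
    rwa [Nat.sub_add_cancel (by omega)]

theorem maxInf_eq_of_frequently {u : ℕ → ℕ} {p : ℕ} (hle : ∀ n, u n ≤ p)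
    (hfreq : ∀ N, ∃ n ≥ N, u n = p) : MaxInf u = p := by
  have hub : ∀ k ∈ InfOcc u, k ≤ p := fun k hk => by
    obtain ⟨n, -, rfl⟩ := hk 0
    exact hle n
  exact le_antisymm (csSup_le ⟨p, hfreq⟩ hub) (le_csSup ⟨p, hub⟩ hfreq)

theorem prefixIndependent_parityWin : PrefixIndependent ParityWin := by
  intro w ρ
  have htail : (fun n => ListAppend w ρ (n + w.length)) = ρ := funext fun n => by
    simp [ListAppend]
  show Even (sSup _) ↔ Even (sSup _)
  rw [← infOcc_comp_add _ w.length, htail]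

namespace PrefixIndependent

variable {C : Type*} {W : Set (ℕ → C)}

theorem compl_s8 (hW : PrefixIndependent W) : PrefixIndependent Wᶜ :=
  fun w ρ => not_congr (hW w ρ)

theorem comp_add_mem_iff (hW : PrefixIndependent W) (u : ℕ → C) (k : ℕ) :
    (fun n => u (n + k)) ∈ W ↔ u ∈ W := by
  have hu : ListAppend (List.ofFn fun i : Fin k => u i) (fun n => u (n + k)) = u :=
    funext fun n => by
      by_cases hn : n < k
      · simp [ListAppend, hn]
      · simp [ListAppend, hn, Nat.sub_add_cancel (not_lt.mp hn)]
  rw [← hW (List.ofFn fun i : Fin k => u i), hu]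

end PrefixIndependent

end Sequences

variable {V : Type u}

section Subgames

variable {C : Type*}

/- A player is given by the set `P` of vertices it controls and its winning condition `W`;
in the subgame on `U` plays are confined to `U`. -/
variable (E : Set (V × V)) (π : V → C) (P : Set V) (W : Set (ℕ → C))

def IsSubarena (U : Set V) : Prop :=
  ∀ v ∈ U, ∃ w ∈ U, (v, w) ∈ E

def IsStrategyIn (U : Set V) (σ : V → V) : Prop :=
  ∀ v ∈ P, v ∈ U → (v, σ v) ∈ E ∧ σ v ∈ U

def WinsIn (U : Set V) (σ : V → V) (v : V) : Prop :=
  ∀ ρ : ℕ → V, ρ 0 = v → (∀ n, ρ n ∈ U) → IsRun E ρ → Compatible P σ ρ →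
    (fun n => π (ρ n)) ∈ W

def winRegionIn (U : Set V) : Set V :=
  {v ∈ U | ∃ σ, IsStrategyIn E P U σ ∧ WinsIn E π P W U σ v}

def IsTrapIn (U S : Set V) : Prop :=
  ∀ v ∈ S, v ∈ P → ∀ w ∈ U, (v, w) ∈ E → w ∈ S

/-- The controllable predecessor of `X` in the subgame on `U`. -/
def cpre (U X : Set V) : Set V :=
  {v ∈ U | (v ∈ P → ∃ w ∈ U, (v, w) ∈ E ∧ w ∈ X) ∧ (v ∉ P → ∀ w ∈ U, (v, w) ∈ E → w ∈ X)}

open Classical in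
noncomputable def moveIn (U : Set V) (v : V) : V :=
  if h : ∃ w ∈ U, (v, w) ∈ E then h.choose else v

variable {E π P W} {U S X : Set V} {σ τ : V → V} {v w : V}

theorem cpre_mono {Y : Set V} (h : X ⊆ Y) : cpre E P U X ⊆ cpre E P U Y :=
  fun _ ⟨hv, hown, hopp⟩ =>
    ⟨hv, fun hP => (hown hP).imp fun _ ⟨hw, he, hX⟩ => ⟨hw, he, h hX⟩,
      fun hP w hw he => h (hopp hP w hw he)⟩

theorem IsSubarena.isStrategyIn_moveIn (hU : IsSubarena E U) :
    IsStrategyIn E P U (moveIn E U) := fun v _ hv => by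
  have h := hU v hv
  simp only [moveIn, dif_pos h]
  exact ⟨h.choose_spec.2, h.choose_spec.1⟩

theorem isStrategyIn_piecewise [DecidablePred (· ∈ S)]
    (hσ : ∀ v ∈ P, v ∈ S → (v, σ v) ∈ E ∧ σ v ∈ U) (hτ : IsStrategyIn E P U τ) :
    IsStrategyIn E P U (S.piecewise σ τ) := fun v hP hv => by
  by_cases hS : v ∈ S
  · simpa [hS] using hσ v hP hS
  · simpa [hS] using hτ v hP hv

theorem IsTrapIn.mono {P' : Set V} (h : P' ⊆ P) (hS : IsTrapIn E P U S) : IsTrapIn E P' U S :=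
  fun v hv hP' => hS v hv (h hP')

theorem IsSubarena.diff (hU : IsSubarena E U) (hX : cpre E P U X ⊆ X) :
    IsSubarena E (U \ X) := by
  intro v ⟨hvU, hvX⟩
  by_contra! hstuck
  refine hvX (hX ⟨hvU, fun _ => ?_, fun _ w hw he => ?_⟩)
  · obtain ⟨w, hw, he⟩ := hU v hvU
    exact ⟨w, hw, he, by_contra fun hwX => hstuck w ⟨hw, hwX⟩ he⟩
  · exact by_contra fun hwX => hstuck w ⟨hw, hwX⟩ he

theorem isTrapIn_diff (hX : cpre E P U X ⊆ X) : IsTrapIn E P U (U \ X) :=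
  fun _ ⟨hvU, hvX⟩ hP w hw he =>
    ⟨hw, fun hwX => hvX (hX ⟨hvU, fun _ => ⟨w, hw, he, hwX⟩, fun hnP => absurd hP hnP⟩)⟩

theorem WinsIn.mem_of_tail (hW : PrefixIndependent W) {ρ : ℕ → V} {N : ℕ}
    (hwin : WinsIn E π P W U σ (ρ N)) (hrun : IsRun E ρ) (hU : ∀ n ≥ N, ρ n ∈ U)
    (hcomp : ∀ n ≥ N, ρ n ∈ P → ρ (n + 1) = σ (ρ n)) : (fun n => π (ρ n)) ∈ W := by
  refine (hW.comp_add_mem_iff _ N).mp (hwin (fun n => ρ (n + N)) (by simp)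
    (fun n => hU _ (by omega)) (fun n => ?_) (fun n hn => ?_))
  · simpa [Nat.add_right_comm] using hrun (n + N)
  · simpa [Nat.add_right_comm] using hcomp (n + N) (by omega) hn

theorem WinsIn.of_step (hW : PrefixIndependent W) (hwin : WinsIn E π P W U σ v) (hv : v ∈ U)
    (he : (v, w) ∈ E) (hcomp : v ∈ P → w = σ v) : WinsIn E π P W U σ w := by
  intro ρ h0 hU hrun hc
  let ρ' : ℕ → V := fun n => Nat.casesOn n v ρ
  refine (hW.comp_add_mem_iff _ 1).mpr (hwin ρ' rfl (fun n => ?_) (fun n => ?_) (fun n => ?_))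
  · cases n
    exacts [hv, hU _]
  · cases n
    · show (v, ρ 0) ∈ E
      rwa [h0]
    · exact hrun _
  · cases n
    exacts [fun hP => h0.trans (hcomp hP), hc _]

/-- The strategies are well-ordered through `embeddingToCardinal`, and at each vertex we play
the least strategy winning from it; along a compatible play that index can only decrease,
so it stabilizes, after which the play follows a single winning strategy. -/
theorem exists_uniform_winning (hW : PrefixIndependent W) (hU : IsSubarena E U) :
    ∃ σ, IsStrategyIn E P U σ ∧ ∀ v ∈ winRegionIn E π P W U, WinsIn E π P W U σ v := by
  classical
  let idx := embeddingToCardinal (α := V → V)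
  let good : V → Set (V → V) := fun v => {σ | IsStrategyIn E P U σ ∧ WinsIn E π P W U σ v}
  let best : V → V → V := fun v =>
    if h : (good v).Nonempty then Function.argminOn idx (good v) h else moveIn E U
  have best_mem : ∀ v, (good v).Nonempty → best v ∈ good v := fun v h => by
    simpa only [best, dif_pos h] using Function.argminOn_mem idx (good v) h
  have best_le : ∀ v σ, σ ∈ good v → idx (best v) ≤ idx σ := fun v σ h => by
    have hne : (good v).Nonempty := ⟨σ, h⟩
    simpa only [best, dif_pos hne] using Function.argminOn_le idx (good v) h
  have best_strategy : ∀ v, IsStrategyIn E P U (best v) := fun v => by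
    by_cases h : (good v).Nonempty
    · exact (best_mem v h).1
    · simpa only [best, dif_neg h] using hU.isStrategyIn_moveIn
  refine ⟨fun v => best v v, fun v hP hv => best_strategy v v hP hv, ?_⟩
  rintro v ⟨-, hgood⟩ ρ h0 hρU hrun hcomp
  have hstep : ∀ n, best (ρ n) ∈ good (ρ n) →
      best (ρ n) ∈ good (ρ (n + 1)) := fun n h =>
    ⟨h.1, h.2.of_step hW (hρU n) (hrun n) (hcomp n)⟩
  have hinv : ∀ n, best (ρ n) ∈ good (ρ n) := fun n => by
    induction n with
    | zero => exact h0 ▸ best_mem v hgood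
    | succ n ih => exact best_mem _ ⟨_, hstep n ih⟩
  obtain ⟨N, hN⟩ := WellFoundedLT.antitone_chain_condition (f := fun n => idx (best (ρ n)))
    (antitone_nat_of_succ_le fun n => best_le _ _ (hstep n (hinv n)))
  refine (hinv N).2.mem_of_tail hW hrun (fun n _ => hρU n) fun n hn hP => ?_
  rw [hcomp n hP, idx.injective (hN n hn)]

theorem mem_of_reach_winRegionIn (hW : PrefixIndependent W) (hτ : IsStrategyIn E P U τ)
    (hτwin : ∀ x ∈ winRegionIn E π P W U, WinsIn E π P W U τ x) {ρ : ℕ → V} {N : ℕ}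
    (hN : ρ N ∈ winRegionIn E π P W U) (hrun : IsRun E ρ) (hU : ∀ n, ρ n ∈ U)
    (hcomp : ∀ n ≥ N, ρ n ∈ winRegionIn E π P W U → ρ n ∈ P → ρ (n + 1) = τ (ρ n)) :
    (fun n => π (ρ n)) ∈ W := by
  have hR : ∀ n ≥ N, ρ n ∈ winRegionIn E π P W U := fun n hn => by
    induction n, hn using Nat.le_induction with
    | base => exact hN
    | succ n hn ih =>
      exact ⟨hU _, τ, hτ, (hτwin _ ih).of_step hW (hU n) (hrun n) (hcomp n hn ih)⟩
  exact (hτwin _ hN).mem_of_tail hW hrun (fun n _ => hU n)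
    fun n hn => hcomp n hn (hR n hn)

theorem winRegionIn_subset_of_isTrapIn (hU : IsSubarena E U) (hSU : S ⊆ U)
    (hS : IsTrapIn E Pᶜ U S) : winRegionIn E π P W S ⊆ winRegionIn E π P W U := by
  classical
  rintro v ⟨hvS, σ, hσ, hwin⟩
  refine ⟨hSU hvS, S.piecewise σ (moveIn E U),
    isStrategyIn_piecewise (fun x hP hx => (hσ x hP hx).imp_right (@hSU _))
      hU.isStrategyIn_moveIn, ?_⟩
  intro ρ h0 hρU hrun hcomp
  have hρS : ∀ n, ρ n ∈ S := fun n => by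
    induction n with
    | zero => exact h0 ▸ hvS
    | succ n ih =>
      by_cases hP : ρ n ∈ P
      · rw [hcomp n hP, piecewise_eq_of_mem _ _ _ ih]
        exact (hσ _ hP ih).2
      · exact hS _ ih hP _ (hρU _) (hrun n)
  exact hwin ρ h0 hρS hrun fun n hP => (hcomp n hP).trans (piecewise_eq_of_mem _ _ _ (hρS n))

theorem cpre_winRegionIn_subset (hW : PrefixIndependent W) (hU : IsSubarena E U) :
    cpre E P U (winRegionIn E π P W U) ⊆ winRegionIn E π P W U := by
  classical
  obtain ⟨τ, hτ, hτwin⟩ := exists_uniform_winning hW hU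
  intro v ⟨hvU, hown, hopp⟩
  by_cases hvR : v ∈ winRegionIn E π P W U
  · exact hvR
  obtain ⟨w, hw, he, hwR⟩ : ∃ w ∈ U, (v, w) ∈ E ∧ (v ∈ P → w ∈ winRegionIn E π P W U) := by
    by_cases hP : v ∈ P
    · obtain ⟨w, hw, he, hwR⟩ := hown hP
      exact ⟨w, hw, he, fun _ => hwR⟩
    · obtain ⟨w, hw, he⟩ := hU v hvU
      exact ⟨w, hw, he, fun h => absurd h hP⟩
  refine ⟨hvU, Function.update τ v w, fun x hP hx => ?_, ?_⟩
  · by_cases hxv : x = v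
    · subst hxv
      simpa using ⟨he, hw⟩
    · simpa [hxv] using hτ x hP hx
  intro ρ h0 hρU hrun hcomp
  have h1 : ρ 1 ∈ winRegionIn E π P W U := by
    by_cases hP : v ∈ P
    · rw [hcomp 0 (h0 ▸ hP), h0, Function.update_self]
      exact hwR hP
    · exact hopp hP _ (hρU 1) (h0 ▸ hrun 0)
  refine mem_of_reach_winRegionIn hW hτ hτwin h1 hrun hρU fun n _ hR hP => ?_
  rw [hcomp n hP, Function.update_of_ne (ne_of_mem_of_not_mem hR hvR)]

theorem winRegionIn_diff_winRegionIn (hW : PrefixIndependent W) (hU : IsSubarena E U) :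
    winRegionIn E π P W (U \ winRegionIn E π P W U) = ∅ := by
  classical
  obtain ⟨τ, hτ, hτwin⟩ := exists_uniform_winning hW hU
  set R := winRegionIn E π P W U
  refine eq_empty_of_forall_notMem fun v ⟨hvY, σ, hσ, hwin⟩ => hvY.2 ?_
  refine ⟨hvY.1, (U \ R).piecewise σ τ,
    isStrategyIn_piecewise (fun x hP hx => (hσ x hP hx).imp_right fun h => h.1) hτ, ?_⟩
  intro ρ h0 hρU hrun hcomp
  by_cases hreach : ∃ N, ρ N ∈ R
  · obtain ⟨N, hN⟩ := hreach
    exact mem_of_reach_winRegionIn hW hτ hτwin hN hrun hρU fun n _ hR hP =>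
      (hcomp n hP).trans (piecewise_eq_of_notMem _ _ _ fun h => h.2 hR)
  · simp only [not_exists] at hreach
    have hY : ∀ n, ρ n ∈ U \ R := fun n => ⟨hρU n, hreach n⟩
    exact hwin ρ h0 hY hrun fun n hP => (hcomp n hP).trans (piecewise_eq_of_mem _ _ _ (hY n))

theorem winRegionIn_univ : winRegionIn E π P W univ = WinRegionAll P E π W := by
  ext v
  simp [winRegionIn, WinRegionAll, IsStrategyIn, IsStrategy, WinsIn, WinsFrom]

end Subgames

section Attractor

variable (E : Set (V × V)) (P U T : Set V)

def attrStep : Set V →o Set V where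
  toFun X := T ∪ cpre E P U X
  monotone' _ _ h := union_subset_union_right T (cpre_mono h)

def attractor : Set V := (attrStep E P U T).lfp

noncomputable def attrRank (v : V) : Ordinal.{u} :=
  sInf {a | v ∈ lfpApprox (attrStep E P U T) ⊥ a}

open Classical in
noncomputable def attrMove (v : V) : V :=
  if h : ∃ w ∈ U, (v, w) ∈ E ∧ ∃ a < attrRank E P U T v, w ∈ lfpApprox (attrStep E P U T) ⊥ a
  then h.choose else moveIn E U v

variable {E P U T} {v w : V}

theorem mem_lfpApprox_attrStep {a : Ordinal.{u}} : v ∈ lfpApprox (attrStep E P U T) ⊥ a ↔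
    ∃ b < a, v ∈ attrStep E P U T (lfpApprox (attrStep E P U T) ⊥ b) := by
  rw [lfpApprox]
  simp

theorem lfpApprox_subset_attractor (a : Ordinal.{u}) :
    lfpApprox (attrStep E P U T) ⊥ a ⊆ attractor E P U T :=
  lfpApprox_le_of_mem_fixedPoints _ (OrderHom.map_lfp _) bot_le a

theorem mem_lfpApprox_attrRank (hv : v ∈ attractor E P U T) :
    v ∈ lfpApprox (attrStep E P U T) ⊥ (attrRank E P U T v) := by
  rw [attractor, ← lfpApprox_ord_eq_lfp] at hv
  exact csInf_mem (s := {a | v ∈ lfpApprox (attrStep E P U T) ⊥ a}) ⟨_, hv⟩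

theorem attrRank_le {a : Ordinal.{u}} (hv : v ∈ lfpApprox (attrStep E P U T) ⊥ a) :
    attrRank E P U T v ≤ a :=
  csInf_le' hv

theorem subset_attractor : T ⊆ attractor E P U T := fun v hv => by
  rw [attractor, ← OrderHom.map_lfp]
  exact Or.inl hv

theorem cpre_attractor_subset : cpre E P U (attractor E P U T) ⊆ attractor E P U T :=
  fun v hv => by
    rw [attractor, ← OrderHom.map_lfp]
    exact Or.inr hv

theorem IsSubarena.isStrategyIn_attrMove (hU : IsSubarena E U) :
    IsStrategyIn E P U (attrMove E P U T) := fun v hP hv => by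
  unfold attrMove
  split_ifs with h
  · exact ⟨h.choose_spec.2.1, h.choose_spec.1⟩
  · exact hU.isStrategyIn_moveIn v hP hv

theorem attrRank_lt_of_step (hv : v ∈ attractor E P U T) (hvT : v ∉ T) (hw : w ∈ U)
    (he : (v, w) ∈ E) (hmove : v ∈ P → w = attrMove E P U T v) :
    w ∈ attractor E P U T ∧ attrRank E P U T w < attrRank E P U T v := by
  suffices ∃ a < attrRank E P U T v, w ∈ lfpApprox (attrStep E P U T) ⊥ a by
    obtain ⟨a, ha, hwa⟩ := this
    exact ⟨lfpApprox_subset_attractor a hwa, (attrRank_le hwa).trans_lt ha⟩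
  obtain ⟨b, hb, hvb | ⟨-, hown, hopp⟩⟩ := mem_lfpApprox_attrStep.mp (mem_lfpApprox_attrRank hv)
  · exact absurd hvb hvT
  by_cases hP : v ∈ P
  · obtain ⟨w', hw', he', hw'b⟩ := hown hP
    have h : ∃ w ∈ U, (v, w) ∈ E ∧
        ∃ a < attrRank E P U T v, w ∈ lfpApprox (attrStep E P U T) ⊥ a :=
      ⟨w', hw', he', b, hb, hw'b⟩
    rw [hmove hP, attrMove, dif_pos h]
    exact h.choose_spec.2.2
  · exact ⟨b, hb, hopp hP w hw he⟩

theorem exists_mem_of_mem_attractor {ρ : ℕ → V} {N : ℕ} (hN : ρ N ∈ attractor E P U T)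
    (hrun : IsRun E ρ) (hU : ∀ n, ρ n ∈ U)
    (hcomp : ∀ n, ρ n ∈ attractor E P U T → ρ n ∈ P → ρ (n + 1) = attrMove E P U T (ρ n)) :
    ∃ n ≥ N, ρ n ∈ T := by
  by_contra! hT
  have hstep : ∀ k, ρ (N + k) ∈ attractor E P U T →
      ρ (N + k + 1) ∈ attractor E P U T ∧
        attrRank E P U T (ρ (N + k + 1)) < attrRank E P U T (ρ (N + k)) := fun k hk =>
    attrRank_lt_of_step hk (hT _ (by omega)) (hU _) (hrun _) (hcomp _ hk)
  have hA : ∀ k, ρ (N + k) ∈ attractor E P U T := fun k => by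
    induction k with
    | zero => exact hN
    | succ k ih => exact (hstep k ih).1
  exact not_strictAnti_of_wellFoundedLT (fun k => attrRank E P U T (ρ (N + k)))
    (strictAnti_nat_of_succ_lt fun k => (hstep k (hA k)).2)

end Attractor

section Determinacy

variable {E : Set (V × V)} {π : V → ℕ} {P Q : Set V} {W : Set (ℕ → ℕ)} {p : ℕ} {U : Set V}

theorem subset_winRegionIn_of_winRegionIn_compl_eq_empty (hcover : P ∪ Q = univ)
    (hW : PrefixIndependent W)
    (htop : ∀ u : ℕ → ℕ, (∀ n, u n ≤ p) → (∀ N, ∃ n ≥ N, u n = p) → u ∈ W)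
    (ih : ∀ U', IsSubarena E U' → (∀ v ∈ U', π v < p) →
      U' ⊆ winRegionIn E π P W U' ∪ winRegionIn E π Q Wᶜ U')
    (hU : IsSubarena E U) (hπ : ∀ v ∈ U, π v ≤ p) (hQ : winRegionIn E π Q Wᶜ U = ∅) :
    U ⊆ winRegionIn E π P W U := by
  classical
  set T := {v ∈ U | π v = p}
  set A := attractor E P U T
  have hA : cpre E P U A ⊆ A := cpre_attractor_subset
  have hrest : IsSubarena E (U \ A) := hU.diff hA
  have hQrest : winRegionIn E π Q Wᶜ (U \ A) = ∅ := subset_empty_iff.mp <| hQ ▸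
    winRegionIn_subset_of_isTrapIn hU sdiff_subset
      ((isTrapIn_diff hA).mono (compl_subset_iff_union.mpr ((union_comm Q P).trans hcover)))
  have hPrest : U \ A ⊆ winRegionIn E π P W (U \ A) := fun v hv =>
    (ih _ hrest (fun x hx => (hπ x hx.1).lt_of_ne fun h => hx.2 (subset_attractor ⟨hx.1, h⟩))
      hv).resolve_right (hQrest ▸ notMem_empty v)
  obtain ⟨σ, hσ, hσwin⟩ := exists_uniform_winning hW hrest
  intro v hv
  refine ⟨hv, (U \ A).piecewise σ (attrMove E P U T),
    isStrategyIn_piecewise (fun x hP hx => (hσ x hP hx).imp_right fun h => h.1)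
      hU.isStrategyIn_attrMove, ?_⟩
  intro ρ h0 hρU hrun hcomp
  by_cases hfreq : ∀ N, ∃ n ≥ N, ρ n ∈ T
  · exact htop _ (fun n => hπ _ (hρU n)) fun N =>
      (hfreq N).imp fun n ⟨hn, hT⟩ => ⟨hn, hT.2⟩
  obtain ⟨N, hN⟩ : ∃ N, ∀ n ≥ N, ρ n ∉ T := by simpa using hfreq
  -- from `N` on the play avoids `A`, since from `A` the attractor strategy forces a visit to `T`
  have hrestN : ∀ n ≥ N, ρ n ∈ U \ A := fun n hn => ⟨hρU n, fun hAn => by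
    obtain ⟨m, hm, hmT⟩ := exists_mem_of_mem_attractor hAn hrun hρU fun k hk hP =>
      (hcomp k hP).trans (piecewise_eq_of_notMem _ _ _ fun h => h.2 hk)
    exact hN m (by omega) hmT⟩
  exact (hσwin _ (hPrest (hrestN N le_rfl))).mem_of_tail hW hrun hrestN fun n hn hP =>
    (hcomp n hP).trans (piecewise_eq_of_mem _ _ _ (hrestN n hn))

theorem subset_winRegionIn_union_of_top (hcover : P ∪ Q = univ) (hW : PrefixIndependent W)
    (htop : ∀ u : ℕ → ℕ, (∀ n, u n ≤ p) → (∀ N, ∃ n ≥ N, u n = p) → u ∈ W)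
    (ih : ∀ U', IsSubarena E U' → (∀ v ∈ U', π v < p) →
      U' ⊆ winRegionIn E π P W U' ∪ winRegionIn E π Q Wᶜ U')
    (hU : IsSubarena E U) (hπ : ∀ v ∈ U, π v ≤ p) :
    U ⊆ winRegionIn E π P W U ∪ winRegionIn E π Q Wᶜ U := by
  set X := winRegionIn E π Q Wᶜ U
  have hX : cpre E Q U X ⊆ X := cpre_winRegionIn_subset hW.compl_s8 hU
  have hrest : U \ X ⊆ winRegionIn E π P W (U \ X) :=
    subset_winRegionIn_of_winRegionIn_compl_eq_empty hcover hW htop ih (hU.diff hX)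
      (fun v hv => hπ v hv.1) (winRegionIn_diff_winRegionIn hW.compl_s8 hU)
  intro v hv
  by_cases hvX : v ∈ X
  · exact Or.inr hvX
  · exact Or.inl (winRegionIn_subset_of_isTrapIn hU sdiff_subset
      ((isTrapIn_diff hX).mono (compl_subset_iff_union.mpr hcover)) (hrest ⟨hv, hvX⟩))

theorem subset_winRegionIn_parity {V0 V1 : Set V} (hcover : V0 ∪ V1 = univ) (p : ℕ)
    (hU : IsSubarena E U) (hπ : ∀ v ∈ U, π v < p) :
    U ⊆ winRegionIn E π V0 ParityWin U ∪ winRegionIn E π V1 ParityWinᶜ U := by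
  induction p generalizing U with
  | zero => exact fun v hv => absurd (hπ v hv) (Nat.not_lt_zero _)
  | succ p ih =>
    have hπ' : ∀ v ∈ U, π v ≤ p := fun v hv => Nat.lt_succ_iff.mp (hπ v hv)
    rcases Nat.even_or_odd p with hp | hp
    · refine subset_winRegionIn_union_of_top hcover prefixIndependent_parityWin
        (fun u hle hfreq => ?_) (fun U' hU' => ih hU') hU hπ'
      show Even (MaxInf u)
      rwa [maxInf_eq_of_frequently hle hfreq]
    · have h := subset_winRegionIn_union_of_top (W := ParityWinᶜ) ((union_comm V1 V0).trans hcover)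
        prefixIndependent_parityWin.compl_s8 (fun u hle hfreq => ?_)
        (fun U' hU' hπU' => by simpa only [compl_compl, union_comm] using ih hU' hπU') hU hπ'
      · simpa only [compl_compl, union_comm] using h
      · show ¬ Even (MaxInf u)
        rwa [maxInf_eq_of_frequently hle hfreq, Nat.not_even_iff_odd]

end Determinacy

theorem stmt8_general {V : Type*} [Nonempty V] (V0 V1 : Set V) (E : Set (V × V)) (π : V → ℕ)
    (hcover : V0 ∪ V1 = Set.univ)
    (hE : ∀ v : V, ∃ u, (v, u) ∈ E)
    (hbdd : ∃ B, ∀ v, π v ≤ B) :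
    WinRegionAll V0 E π ParityWin ∪ WinRegionAll V1 E π ParityWinᶜ ≠ ∅ := by
  obtain ⟨B, hB⟩ := hbdd
  obtain ⟨v⟩ := ‹Nonempty V›
  have harena : IsSubarena E (univ : Set V) := fun v _ => (hE v).imp fun w hw => ⟨mem_univ w, hw⟩
  have hv := subset_winRegionIn_parity hcover (B + 1) harena (fun v _ => Nat.lt_succ_of_le (hB v))
    (mem_univ v)
  rw [winRegionIn_univ, winRegionIn_univ] at hv
  exact nonempty_iff_ne_empty.mp ⟨v, hv⟩

/-- in a parity game with a nonempty vertex set, some vertex is won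
by some player using a memoryless strategy. -/
theorem stmt8 {V : Type*} [Nonempty V] (V0 V1 : Set V) (E : Set (V × V)) (π : V → ℕ)
    (hdisj : Disjoint V0 V1) (hcover : V0 ∪ V1 = Set.univ)
    (hE : ∀ v : V, ∃ u, (v, u) ∈ E)
    (hbdd : ∃ B, ∀ v, π v ≤ B) :
    WinRegionAll V0 E π ParityWin ∪ WinRegionAll V1 E π ParityWinᶜ ≠ ∅ :=
  stmt8_general V0 V1 E π hcover hE hbdd
end

section
/- Let G = ⟨V₀,V₁,E,π⟩ be a parity game with finitely many priorities, let k be an even priority, let D be the set of relevant vertices of G with priority k, and let G⁺ and f be the associated split game and merge map. If τ⁺ is a Player-1 memoryless strategy of G⁺ and v ∈ V ∩ W₁ᵐ(G⁺,τ⁺), then the Player-1 memoryless strategy f ∘ τ⁺ of G wins from v in G; moreover every run of G starting at v and compatible with f ∘ τ⁺ never visits D after its starting vertex. -/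
/-- `D`: the set of relevant vertices of priority `k`. -/
def SplitD {V : Type*} (E : Set (V × V)) (π : V → ℕ) (k : ℕ) : Set V :=
  {v | Relevant E v ∧ π v = k}

/-- The merge map `f : V ∪ D̃ → V` (the split game's vertices are `V ⊕ D̃`,
with `Sum.inl v` the original/vanishing copy and `Sum.inr ṽ` the absorbing copy). -/
def MergeMap {V : Type*} (E : Set (V × V)) (π : V → ℕ) (k : ℕ) :
    V ⊕ ↥(SplitD E π k) → V :=
  Sum.elim id Subtype.val

/-- Edges of the split game `G⁺`:
`E⁺ = {(u,v) ∈ E : v ∉ D} ∪ {(u,ṽ) : (u,v) ∈ E, v ∈ D} ∪ D̃ × D̃`. -/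
def SplitE {V : Type*} (E : Set (V × V)) (π : V → ℕ) (k : ℕ) :
    Set ((V ⊕ ↥(SplitD E π k)) × (V ⊕ ↥(SplitD E π k))) :=
  {p | (∃ u v, p = (Sum.inl u, Sum.inl v) ∧ (u, v) ∈ E ∧ v ∉ SplitD E π k) ∨
       (∃ (u : V) (v : ↥(SplitD E π k)), p = (Sum.inl u, Sum.inr v) ∧ (u, v.val) ∈ E) ∨
       (∃ (u v : ↥(SplitD E π k)), p = (Sum.inr u, Sum.inr v))}

/-- `Vᵢ⁺`: both copies of a split vertex keep their controller. -/
def SplitSide {V : Type*} (Vi : Set V) (E : Set (V × V)) (π : V → ℕ) (k : ℕ) :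
    Set (V ⊕ ↥(SplitD E π k)) :=
  {x | MergeMap E π k x ∈ Vi}

/-- `π⁺`: both copies of a split vertex keep the priority `k`; note that
`π⁺ = π ∘ f` since `π(v) = k = π⁺(ṽ)` for `v ∈ D`. -/
def SplitPi {V : Type*} (E : Set (V × V)) (π : V → ℕ) (k : ℕ) :
    V ⊕ ↥(SplitD E π k) → ℕ :=
  fun x => π (MergeMap E π k x)

/-- The strategy `f ∘ σ⁺` of `G` induced by a strategy `σ⁺` of `G⁺`. -/
def MergeStrat {V : Type*} (E : Set (V × V)) (π : V → ℕ) (k : ℕ)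
    (σp : V ⊕ ↥(SplitD E π k) → V ⊕ ↥(SplitD E π k)) : V → V :=
  fun v => MergeMap E π k (σp (Sum.inl v))

/-- If `u` is eventually constantly `k`, then `MaxInf u = k`. -/
lemma maxinf_eventually_const (u : ℕ → ℕ) (k N₀ : ℕ) (h : ∀ n, N₀ ≤ n → u n = k) :
    MaxInf u = k := by
  have hocc : InfOcc u = {k} := by
    ext j
    simp only [InfOcc, Set.mem_setOf_eq, Set.mem_singleton_iff]
    constructor
    · intro hj
      obtain ⟨n, hn, hj⟩ := hj N₀
      rw [← hj, h n hn]
    · rintro rfl N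
      exact ⟨max N N₀, le_max_left _ _, h _ (le_max_right _ _)⟩
  rw [MaxInf, hocc, csSup_singleton]

/-- if a Player-1 memoryless strategy `τ⁺` of the split game `G⁺`
wins from `v ∈ V`, then `f ∘ τ⁺` wins from `v` in `G`, and every compatible run
from `v` never visits `D` after its starting vertex. -/
theorem stmt14 {V : Type*} (V0 V1 : Set V) (E : Set (V × V)) (π : V → ℕ) (k : ℕ)
    (hdisj : Disjoint V0 V1) (hcover : V0 ∪ V1 = Set.univ)
    (hE : ∀ v : V, ∃ u, (v, u) ∈ E)
    (hbdd : ∃ B, ∀ v, π v ≤ B)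
    (hk : Even k)
    (τp : V ⊕ ↥(SplitD E π k) → V ⊕ ↥(SplitD E π k))
    (hτp : IsStrategy (SplitSide V1 E π k) (SplitE E π k) τp)
    (v : V)
    (hv : Sum.inl v ∈ WinRegion (SplitSide V1 E π k) (SplitE E π k) (SplitPi E π k)
      ParityWinᶜ τp) :
    IsStrategy V1 E (MergeStrat E π k τp) ∧
    WinsFrom V1 E π ParityWinᶜ (MergeStrat E π k τp) v ∧
    (∀ ρ : ℕ → V, ρ 0 = v → IsRun E ρ → Compatible V1 (MergeStrat E π k τp) ρ →
      ∀ n, 1 ≤ n → ρ n ∉ SplitD E π k) := by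
  classical
  -- Basic fact about the strategy at original vertices controlled by Player 1.
  have hA : ∀ u : V, u ∈ V1 → (u, MergeStrat E π k τp u) ∈ E ∧
      ((τp (Sum.inl u) = Sum.inl (MergeStrat E π k τp u) ∧
        MergeStrat E π k τp u ∉ SplitD E π k) ∨
       (∃ h : MergeStrat E π k τp u ∈ SplitD E π k,
        τp (Sum.inl u) = Sum.inr ⟨MergeStrat E π k τp u, h⟩)) := by
    intro u hu
    have hmem : Sum.inl u ∈ SplitSide V1 E π k := hu
    have hedge := hτp (Sum.inl u) hmem
    rcases hedge with ⟨u', v', heq, he, hnD⟩ | ⟨u', v', heq, he⟩ | ⟨u', v', heq⟩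
    · rw [Prod.mk.injEq] at heq
      obtain ⟨h1, h2⟩ := heq
      cases h1
      have hms : MergeStrat E π k τp u = v' := by
        simp [MergeStrat, h2, MergeMap]
      constructor
      · rw [hms]; exact he
      · left
        constructor
        · rw [h2, hms]
        · rw [hms]; exact hnD
    · rw [Prod.mk.injEq] at heq
      obtain ⟨h1, h2⟩ := heq
      cases h1
      have hms : MergeStrat E π k τp u = v'.val := by
        simp [MergeStrat, h2, MergeMap]
      constructor
      · rw [hms]; exact he
      · right
        refine ⟨hms ▸ v'.property, ?_⟩
        rw [h2]
        congr 1
        exact Subtype.ext hms.symm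
    · rw [Prod.mk.injEq] at heq
      exact absurd heq.1 (by simp)
  -- At copies (absorbing vertices), the strategy stays in copies.
  have hB : ∀ z : ↥(SplitD E π k), Sum.inr z ∈ SplitSide V1 E π k →
      ∃ z', τp (Sum.inr z) = Sum.inr z' := by
    intro z hz
    have hedge := hτp (Sum.inr z) hz
    rcases hedge with ⟨u', v', heq, -, -⟩ | ⟨u', v', heq, -⟩ | ⟨u', v', heq⟩
    · rw [Prod.mk.injEq] at heq; exact absurd heq.1 (by simp)
    · rw [Prod.mk.injEq] at heq; exact absurd heq.1 (by simp)
    · rw [Prod.mk.injEq] at heq; exact ⟨v', heq.2⟩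
  -- Part 1 : strategy
  have h1 : IsStrategy V1 E (MergeStrat E π k τp) := fun u hu => (hA u hu).1
  -- Part 3 : compatible runs avoid D after time 0
  have h3 : ∀ ρ : ℕ → V, ρ 0 = v → IsRun E ρ → Compatible V1 (MergeStrat E π k τp) ρ →
      ∀ n, 1 ≤ n → ρ n ∉ SplitD E π k := by
    intro ρ h0 hrun hcomp
    by_contra hcon
    push_neg at hcon
    obtain ⟨n, hn1, hnD⟩ := hcon
    have hex : ∃ m, 1 ≤ m ∧ ρ m ∈ SplitD E π k := ⟨n, hn1, hnD⟩
    set n₀ := Nat.find hex with hn₀def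
    obtain ⟨hn₀1, hn₀D⟩ := Nat.find_spec hex
    -- the step function after entering copies
    set step : (V ⊕ ↥(SplitD E π k)) → (V ⊕ ↥(SplitD E π k)) :=
      fun x => if x ∈ SplitSide V1 E π k then τp x else x with hstepdef
    set ρp : ℕ → V ⊕ ↥(SplitD E π k) :=
      fun m => if m < n₀ then Sum.inl (ρ m)
               else step^[m - n₀] (Sum.inr ⟨ρ n₀, hn₀D⟩) with hρpdef
    have hinr : ∀ j, ∃ z, step^[j] (Sum.inr ⟨ρ n₀, hn₀D⟩) = Sum.inr z := by
      intro j
      induction j with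
      | zero => exact ⟨⟨ρ n₀, hn₀D⟩, rfl⟩
      | succ j ih =>
        obtain ⟨z, hz⟩ := ih
        rw [Function.iterate_succ_apply', hz]
        by_cases hzm : Sum.inr z ∈ SplitSide V1 E π k
        · obtain ⟨z', hz'⟩ := hB z hzm
          exact ⟨z', by simp [hstepdef, if_pos hzm, hz']⟩
        · exact ⟨z, by simp [hstepdef, if_neg hzm]⟩
    have hρp_ge : ∀ m, n₀ ≤ m → ∃ z, ρp m = Sum.inr z := by
      intro m hm
      simp only [hρpdef, if_neg (not_lt.2 hm)]
      exact hinr _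
    have hρp_lt : ∀ m, m < n₀ → ρp m = Sum.inl (ρ m) := by
      intro m hm; simp only [hρpdef, if_pos hm]
    have hρp_succ : ∀ m, n₀ ≤ m → ρp (m + 1) = step (ρp m) := by
      intro m hm
      have h1' : ¬ (m + 1 < n₀) := by omega
      have h2' : ¬ (m < n₀) := not_lt.2 hm
      have h3' : m + 1 - n₀ = (m - n₀) + 1 := by omega
      simp only [hρpdef, if_neg h1', if_neg h2', h3', Function.iterate_succ_apply']
    -- it's a run of the split game
    have hrunp : IsRun (SplitE E π k) ρp := by
      intro m
      rcases lt_or_ge m n₀ with hm | hm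
      · rcases lt_or_ge (m + 1) n₀ with hm1 | hm1
        · rw [hρp_lt m hm, hρp_lt (m + 1) hm1]
          exact Or.inl ⟨ρ m, ρ (m + 1), rfl, hrun m,
            fun hd => Nat.find_min hex hm1 ⟨Nat.succ_le_succ (Nat.zero_le m), hd⟩⟩
        · have hm1' : m + 1 = n₀ := by omega
          have hρ1 : ρp (m + 1) = Sum.inr ⟨ρ n₀, hn₀D⟩ := by
            simp only [hρpdef, if_neg (not_lt.2 hm1)]
            rw [show m + 1 - n₀ = 0 by omega]
            rfl
          rw [hρp_lt m hm, hρ1]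
          refine Or.inr (Or.inl ⟨ρ m, ⟨ρ n₀, hn₀D⟩, rfl, ?_⟩)
          have he := hrun m
          rw [hm1'] at he
          exact he
      · obtain ⟨z, hz⟩ := hρp_ge m hm
        obtain ⟨z', hz'⟩ := hρp_ge (m + 1) (le_trans hm (Nat.le_succ m))
        rw [hz, hz']
        exact Or.inr (Or.inr ⟨z, z', rfl⟩)
    -- it's compatible with τp
    have hcompp : Compatible (SplitSide V1 E π k) τp ρp := by
      intro m hm
      rcases lt_or_ge m n₀ with hmlt | hmge
      · rw [hρp_lt m hmlt] at hm ⊢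
        have hm' : ρ m ∈ V1 := hm
        have hstep : ρ (m + 1) = MergeStrat E π k τp (ρ m) := hcomp m hm'
        rcases (hA (ρ m) hm').2 with ⟨heq, hnotD⟩ | ⟨hD', heq⟩
        · have hnD1 : ρ (m + 1) ∉ SplitD E π k := hstep ▸ hnotD
          have hlt : m + 1 < n₀ := by
            rcases lt_or_ge (m + 1) n₀ with h | h
            · exact h
            · have : m + 1 = n₀ := by omega
              exact absurd (this ▸ hn₀D) hnD1
          rw [hρp_lt (m + 1) hlt, heq, hstep]
        · have hD1 : ρ (m + 1) ∈ SplitD E π k := hstep ▸ hD'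
          have hle : n₀ ≤ m + 1 := Nat.find_le ⟨Nat.succ_le_succ (Nat.zero_le m), hD1⟩
          have heqn : m + 1 = n₀ := by omega
          have hρ1 : ρp (m + 1) = Sum.inr ⟨ρ n₀, hn₀D⟩ := by
            simp only [hρpdef, if_neg (not_lt.2 hle)]
            rw [show m + 1 - n₀ = 0 by omega]
            rfl
          rw [hρ1, heq]
          congr 1
          refine Subtype.ext ?_
          show ρ n₀ = MergeStrat E π k τp (ρ m)
          rw [← heqn, hstep]
      · rw [hρp_succ m hmge]
        simp only [hstepdef, if_pos hm]
    -- from n₀ on, all priorities equal k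
    have hcolor : ∀ m, n₀ ≤ m → SplitPi E π k (ρp m) = k := by
      intro m hm
      obtain ⟨z, hz⟩ := hρp_ge m hm
      rw [hz]
      exact z.property.2
    have h0p : ρp 0 = Sum.inl v := by
      rw [hρp_lt 0 (by omega), h0]
    have hwin := hv ρp h0p hrunp hcompp
    apply hwin
    show Even (MaxInf fun n => SplitPi E π k (ρp n))
    rw [maxinf_eventually_const _ k n₀ (fun n hn => hcolor n hn)]
    exact hk
  -- Part 2 : winning
  have h2 : WinsFrom V1 E π ParityWinᶜ (MergeStrat E π k τp) v := by
    intro ρ h0 hrun hcomp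
    have havoid := h3 ρ h0 hrun hcomp
    set ρp : ℕ → V ⊕ ↥(SplitD E π k) := fun m => Sum.inl (ρ m) with hρpdef
    have hrunp : IsRun (SplitE E π k) ρp := by
      intro m
      exact Or.inl ⟨ρ m, ρ (m + 1), rfl, hrun m,
        havoid (m + 1) (Nat.succ_le_succ (Nat.zero_le m))⟩
    have hcompp : Compatible (SplitSide V1 E π k) τp ρp := by
      intro m hm
      have hm' : ρ m ∈ V1 := hm
      have hstep : ρ (m + 1) = MergeStrat E π k τp (ρ m) := hcomp m hm'
      rcases (hA (ρ m) hm').2 with ⟨heq, hnotD⟩ | ⟨hD', heq⟩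
      · show Sum.inl (ρ (m + 1)) = τp (Sum.inl (ρ m))
        rw [heq, hstep]
      · exact absurd (hstep ▸ hD') (havoid (m + 1) (Nat.succ_le_succ (Nat.zero_le m)))
    have h0p : ρp 0 = Sum.inl v := by rw [hρpdef]; simp [h0]
    exact hv ρp h0p hrunp hcompp
  exact ⟨h1, h2, h3⟩
end

section
/- Let ⟨V₀,V₁,E,π⟩ and ⟨V₀,V₁,E,π'⟩ be two parity games with finitely many priorities on the same arena, and let k be an even number such that for every vertex v either π'(v) = π(v), or π(v) = k and π'(v) = k+1. Then every run that is winning for Player 1 in ⟨V₀,V₁,E,π⟩ is also winning for Player 1 in ⟨V₀,V₁,E,π'⟩; consequently, for every Player-1 memoryless strategy τ, W₁ᵐ(⟨V₀,V₁,E,π⟩,τ) ⊆ W₁ᵐ(⟨V₀,V₁,E,π'⟩,τ), and hence W₁ᵐ(⟨V₀,V₁,E,π⟩) ⊆ W₁ᵐ(⟨V₀,V₁,E,π'⟩). -/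
lemma key16 (u u' : ℕ → ℕ) (k B : ℕ) (hB : ∀ n, u n ≤ B) (hk : Even k)
    (h : ∀ n, u' n = u n ∨ (u n = k ∧ u' n = k + 1)) (hodd : ¬ Even (MaxInf u)) :
    ¬ Even (MaxInf u') := by
  have hbdd : BddAbove (InfOcc u) := by
    refine ⟨B, fun j hj => ?_⟩
    obtain ⟨n, -, hn⟩ := hj 0
    exact hn ▸ hB n
  have hne : (InfOcc u).Nonempty := by
    by_contra hemp
    rw [Set.not_nonempty_iff_eq_empty] at hemp
    apply hodd
    unfold MaxInf
    rw [hemp]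
    simp
  have hm : MaxInf u ∈ InfOcc u := Nat.sSup_mem hne hbdd
  have hmk : MaxInf u ≠ k := fun he => hodd (he ▸ hk)
  have hm' : MaxInf u ∈ InfOcc u' := by
    intro N
    obtain ⟨n, hn, he⟩ := hm N
    refine ⟨n, hn, ?_⟩
    rcases h n with h1 | ⟨h1, _⟩
    · rw [h1, he]
    · omega
  have hub : ∀ j ∈ InfOcc u', j ≤ MaxInf u := by
    intro j hj
    by_cases hjk : j = k + 1
    · subst hjk
      by_cases hkin : k ∈ InfOcc u
      · have hle : k ≤ MaxInf u := le_csSup hbdd hkin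
        omega
      · have : k + 1 ∈ InfOcc u := by
          intro N
          simp only [InfOcc, Set.mem_setOf_eq, not_forall, not_exists, not_and] at hkin
          obtain ⟨M, hM⟩ := hkin
          obtain ⟨n, hn, he⟩ := hj (max N M)
          refine ⟨n, le_trans (le_max_left _ _) hn, ?_⟩
          rcases h n with h1 | ⟨h1, _⟩
          · omega
          · exact absurd h1 (hM n (le_trans (le_max_right _ _) hn))
        exact le_csSup hbdd this
    · have : j ∈ InfOcc u := by
        intro N
        obtain ⟨n, hn, he⟩ := hj N
        refine ⟨n, hn, ?_⟩
        rcases h n with h1 | ⟨h1, h2⟩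
        · omega
        · omega
      exact le_csSup hbdd this
  have : MaxInf u' = MaxInf u :=
    le_antisymm (csSup_le ⟨_, hm'⟩ hub) (le_csSup ⟨MaxInf u, hub⟩ hm')
  rw [this]
  exact hodd

/-- raising some priorities from the even `k` to `k+1` preserves
runs winning for Player 1, hence Player 1's winning regions only grow. -/
theorem stmt16 {V : Type*} (V0 V1 : Set V) (E : Set (V × V)) (π π' : V → ℕ) (k : ℕ)
    (hdisj : Disjoint V0 V1) (hcover : V0 ∪ V1 = Set.univ)
    (hE : ∀ v : V, ∃ u, (v, u) ∈ E)
    (hbdd : ∃ B, ∀ v, π v ≤ B) (hbdd' : ∃ B, ∀ v, π' v ≤ B)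
    (hk : Even k)
    (hππ' : ∀ v, π' v = π v ∨ (π v = k ∧ π' v = k + 1)) :
    (∀ ρ : ℕ → V, IsRun E ρ →
      (fun n => π (ρ n)) ∈ ParityWinᶜ → (fun n => π' (ρ n)) ∈ ParityWinᶜ) ∧
    (∀ τ : V → V, WinRegion V1 E π ParityWinᶜ τ ⊆ WinRegion V1 E π' ParityWinᶜ τ) ∧
    WinRegionAll V1 E π ParityWinᶜ ⊆ WinRegionAll V1 E π' ParityWinᶜ := by
  obtain ⟨B, hB⟩ := hbdd
  have main : ∀ ρ : ℕ → V, IsRun E ρ →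
      (fun n => π (ρ n)) ∈ ParityWinᶜ → (fun n => π' (ρ n)) ∈ ParityWinᶜ := by
    intro ρ _ hρ
    exact key16 (fun n => π (ρ n)) (fun n => π' (ρ n)) k B (fun n => hB (ρ n)) hk
      (fun n => hππ' (ρ n)) hρ
  refine ⟨main, fun τ v hv ρ h0 hrun hcomp => main ρ hrun (hv ρ h0 hrun hcomp), ?_⟩
  rintro v ⟨σ, hσ, hw⟩
  exact ⟨σ, hσ, fun ρ h0 hrun hcomp => main ρ hrun (hw ρ h0 hrun hcomp)⟩
end
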